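/- arXiv:2110.01201 — 5 statements merged into one kernel-verified Lean document; each statement's English description precedes it below -/
import Mathlib

section
/- Let φ be a Bernstein function with φ(0) = 0, and for t > 0 let μ_t be the Borel probability measure on [0,∞) with Laplace transform ∫_{[0,∞)} e^{−λs} μ_t(ds) = e^{−t·φ(λ)} for all λ ≥ 0. Then for every C > 0 and every t > 0, ∫_{[0,∞)} min{1, C·s} μ_t(ds) ≤ (e/(e−1)) · min{1, t·φ(C)}. In particular, for every r > 0 and t > 0, μ_t([r,∞)) ≤ min{1, (e/(e−1)) · t·φ(1/r)}. -/
open MeasureTheory Real Set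

noncomputable section

/-- A Bernstein function: continuous on `[0,∞)`, smooth on `(0,∞)`, nonnegative, and
`(-1)^(n-1) φ^(n)(u) ≥ 0` for all `u > 0` and `n ≥ 1`. -/
def IsBernstein (φ : ℝ → ℝ) : Prop :=
  ContinuousOn φ (Set.Ici 0) ∧ ContDiffOn ℝ (⊤ : ℕ∞) φ (Set.Ioi 0) ∧
  (∀ x ∈ Set.Ici (0 : ℝ), 0 ≤ φ x) ∧
  ∀ n : ℕ, 1 ≤ n → ∀ u : ℝ, 0 < u → 0 ≤ (-1 : ℝ) ^ (n - 1) * iteratedDeriv n φ u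

/-- `μ t` is the law of the subordinator with Laplace exponent `φ` at time `t > 0`:
a probability measure supported on `[0,∞)` with Laplace transform `e^{-t φ(λ)}`. -/
def IsSubordinatorLaw (φ : ℝ → ℝ) (μ : ℝ → Measure ℝ) : Prop :=
  ∀ t : ℝ, 0 < t →
    IsProbabilityMeasure (μ t) ∧ μ t (Set.Iio 0) = 0 ∧
    ∀ l : ℝ, 0 ≤ l → (∫ s, Real.exp (-l * s) ∂μ t) = Real.exp (-t * φ l)

lemma aux_lower {x : ℝ} (hx : 0 ≤ x) :
    min 1 x ≤ Real.exp 1 / (Real.exp 1 - 1) * (1 - Real.exp (-x)) := by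
  have he : (1:ℝ) < Real.exp 1 := by
    have := Real.exp_one_gt_d9; linarith
  have hinv : Real.exp (-1) * Real.exp 1 = 1 := by
    rw [← Real.exp_add]; norm_num
  rw [div_mul_eq_mul_div, le_div_iff₀ (by linarith)]
  rcases le_total x 1 with h | h
  · rw [min_eq_right h]
    have hconv := convexOn_exp.2 (Set.mem_univ (0:ℝ)) (Set.mem_univ (-1:ℝ))
      (by linarith : (0:ℝ) ≤ 1 - x) hx (by ring)
    simp only [smul_eq_mul, mul_zero, mul_neg_one, zero_add, Real.exp_zero, mul_one] at hconv
    nlinarith [Real.exp_pos (-x), Real.exp_pos (-1)]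
  · rw [min_eq_left h]
    have hmono : Real.exp (-x) ≤ Real.exp (-1) := Real.exp_le_exp.mpr (by linarith)
    nlinarith [Real.exp_pos (-x)]

lemma aux_upper {x : ℝ} (hx : 0 ≤ x) : 1 - Real.exp (-x) ≤ min 1 x := by
  refine le_min (by linarith [Real.exp_pos (-x)]) ?_
  linarith [Real.add_one_le_exp (-x)]

theorem subordinator_min_upper_bound
    (φ : ℝ → ℝ) (hφ : IsBernstein φ) (hφ0 : φ 0 = 0)
    (μ : ℝ → Measure ℝ) (hμ : IsSubordinatorLaw φ μ) :
    ∀ C : ℝ, 0 < C → ∀ t : ℝ, 0 < t →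
      ((∫ s, min 1 (C * s) ∂μ t) ≤
        Real.exp 1 / (Real.exp 1 - 1) * min 1 (t * φ C)) ∧
      ∀ r : ℝ, 0 < r →
        (μ t (Set.Ici r)).toReal ≤
          min 1 (Real.exp 1 / (Real.exp 1 - 1) * (t * φ (1 / r))) := by
  intro C hC t ht
  obtain ⟨hprob, hneg, hlap⟩ := hμ t ht
  have hae : ∀ᵐ s ∂(μ t), 0 ≤ s := by
    rw [MeasureTheory.ae_iff]
    have hset : {s : ℝ | ¬ 0 ≤ s} = Set.Iio 0 := by ext s; simp
    rw [hset]; exact hneg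
  set E := Real.exp 1 / (Real.exp 1 - 1) with hE
  have he : (1:ℝ) < Real.exp 1 := by
    have := Real.exp_one_gt_d9; linarith
  have hEpos : (0:ℝ) < E := by
    exact div_pos (Real.exp_pos 1) (by linarith)
  have hmin_int : ∀ D : ℝ, 0 < D → Integrable (fun s => min 1 (D * s)) (μ t) := by
    intro D hD
    refine Integrable.mono' (integrable_const 1)
      ((continuous_const.min (continuous_const.mul continuous_id)).aestronglyMeasurable) ?_
    filter_upwards [hae] with s hs
    rw [Real.norm_eq_abs, abs_le]
    exact ⟨by have : (0:ℝ) ≤ min 1 (D * s) := le_min zero_le_one (mul_nonneg hD.le hs); linarith,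
      min_le_left _ _⟩
  have key : ∀ D : ℝ, 0 < D →
      (∫ s, min 1 (D * s) ∂μ t) ≤ E * min 1 (t * φ D) := by
    intro D hD
    have hφD : 0 ≤ φ D := hφ.2.2.1 D hD.le
    have hexp_int : Integrable (fun s => Real.exp (-D * s)) (μ t) := by
      by_contra h
      have h2 := hlap D hD.le
      rw [integral_undef h] at h2
      exact (Real.exp_pos _).ne' h2.symm
    have hstep : (∫ s, min 1 (D * s) ∂μ t) ≤
        ∫ s, E * (1 - Real.exp (-D * s)) ∂μ t := by
      refine integral_mono_ae (hmin_int D hD) (((integrable_const 1).sub hexp_int).const_mul E) ?_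
      filter_upwards [hae] with s hs
      have h3 := aux_lower (x := D * s) (mul_nonneg hD.le hs)
      rw [neg_mul]
      exact h3
    have hcalc : (∫ s, E * (1 - Real.exp (-D * s)) ∂μ t)
        = E * (1 - Real.exp (-t * φ D)) := by
      rw [integral_const_mul]
      congr 1
      rw [integral_sub (integrable_const 1) hexp_int, integral_const, hlap D hD.le]
      simp
    refine (hstep.trans hcalc.le).trans ?_
    refine mul_le_mul_of_nonneg_left ?_ hEpos.le
    have h4 := aux_upper (x := t * φ D) (mul_nonneg ht.le hφD)
    rw [neg_mul]; exact h4
  refine ⟨key C hC, ?_⟩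
  intro r hr
  have hrinv : (0:ℝ) < 1 / r := by positivity
  refine le_min ?_ ?_
  · have h1 : μ t (Set.Ici r) ≤ 1 := prob_le_one
    have h2 := ENNReal.toReal_mono ENNReal.one_ne_top h1
    simpa using h2
  · have hind : (μ t (Set.Ici r)).toReal
        = ∫ s, Set.indicator (Set.Ici r) (1 : ℝ → ℝ) s ∂μ t := by
      rw [MeasureTheory.integral_indicator_one measurableSet_Ici]
      rfl
    rw [hind]
    have h1 : (∫ s, Set.indicator (Set.Ici r) (1 : ℝ → ℝ) s ∂μ t)
        ≤ ∫ s, min 1 ((1/r) * s) ∂μ t := by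
      refine integral_mono_ae ((integrable_const 1).indicator measurableSet_Ici)
        (hmin_int _ hrinv) ?_
      filter_upwards [hae] with s hs
      by_cases h : s ∈ Set.Ici r
      · rw [Set.indicator_of_mem h]
        simp only [Pi.one_apply]
        refine le_min le_rfl ?_
        rw [one_div, inv_mul_eq_div, le_div_iff₀ hr, one_mul]
        exact h
      · rw [Set.indicator_of_notMem h]
        exact le_min zero_le_one (mul_nonneg hrinv.le hs)
    exact h1.trans ((key (1/r) hrinv).trans
      (mul_le_mul_of_nonneg_left (min_le_right _ _) hEpos.le))
end
end

section
/- Let φ be a Bernstein function with φ(0) = 0 and φ(1) = 1, and let T_n = R_1 + ⋯ + R_n be the associated discrete subordinator. Then for every C > 0 and every integer n ≥ 1, E[min{1, C·T_n}] ≤ (e/(e−1)) · min{1, n·φ(C)}. In particular, P(T_n ≥ r) ≤ min{1, (e/(e−1)) · n·φ(1/r)} for all r > 0 and n ≥ 1. -/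
open MeasureTheory Real Set
open scoped NNReal ENNReal

noncomputable section

def bernWeight (φ : ℝ → ℝ) (k : ℕ) : ℝ := |iteratedDeriv k φ 1| / (Nat.factorial k : ℝ)

lemma bernWeight_nonneg (φ : ℝ → ℝ) (k : ℕ) : 0 ≤ bernWeight φ k :=
  div_nonneg (abs_nonneg _) (Nat.cast_nonneg _)

lemma bern_deriv_bound (φ : ℝ → ℝ) (hφ : IsBernstein φ) {x h : ℝ} (hh : 0 < h) (hhx : h < x)
    (n : ℕ) : |iteratedDeriv n φ x| * h ^ n / (n.factorial : ℝ) ≤ φ x := by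
  obtain ⟨hcont, hsm, hnn, hsign⟩ := hφ
  cases n with
  | zero =>
    simp only [iteratedDeriv_zero, pow_zero, mul_one, Nat.factorial_zero, Nat.cast_one, div_one]
    rw [abs_of_nonneg (hnn x (by simp only [mem_Ici]; linarith))]
  | succ m =>
    have hne : x ≠ x - h := by linarith
    have hsub : uIcc x (x - h) ⊆ Ioi 0 := by
      intro t ht
      rcases Set.mem_uIcc.1 ht with ht | ht
      · simp only [mem_Ioi]; linarith [ht.1, ht.2]
      · simp only [mem_Ioi]; linarith [ht.1, ht.2]
    have hf : ContDiffOn ℝ ((m + 1 : ℕ) + 1) φ (uIcc x (x - h)) :=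
      (hsm.of_le (by exact_mod_cast (le_top : ((m + 1 + 1 : ℕ) : ℕ∞) ≤ ⊤))).mono hsub
    obtain ⟨ξ, hξ, heq⟩ := taylor_mean_remainder_lagrange_iteratedDeriv hne hf
    have hξpos : 0 < ξ := by
      have h1 := hξ.1
      have : x - h ≤ min x (x - h) := le_min (by linarith) le_rfl
      linarith
    rw [taylor_within_apply] at heq
    set t : ℕ → ℝ := fun k => ((k.factorial : ℝ))⁻¹ * (x - h - x) ^ k * iteratedDeriv k φ x
      with ht
    have hsum : ∑ k ∈ Finset.range (m + 1 + 1), ((k.factorial : ℝ)⁻¹ * (x - h - x) ^ k) •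
        iteratedDerivWithin k φ (uIcc x (x - h)) x = ∑ k ∈ Finset.range (m + 1 + 1), t k := by
      refine Finset.sum_congr rfl fun k _ => ?_
      rw [iteratedDerivWithin_eq_iteratedDeriv (uniqueDiffOn_uIcc hne)
        ((hsm.contDiffAt (Ioi_mem_nhds (by linarith))).of_le
          (by exact_mod_cast (le_top : ((k : ℕ) : ℕ∞) ≤ ⊤))) left_mem_uIcc, smul_eq_mul]
    rw [hsum] at heq
    have hneg : ∀ k : ℕ, t (k + 1) = -(((k + 1).factorial : ℝ)⁻¹ * h ^ (k + 1) *
        ((-1 : ℝ) ^ k * iteratedDeriv (k + 1) φ x)) := by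
      intro k
      simp only [ht]
      rw [show x - h - x = -h by ring, neg_pow h]
      ring
    have htk : ∀ k : ℕ, t (k + 1) ≤ 0 := by
      intro k
      rw [hneg k, neg_nonpos]
      have := hsign (k + 1) (Nat.le_add_left 1 k) x (by linarith)
      simp only [Nat.add_sub_cancel] at this
      positivity
    have hrem : iteratedDeriv (m + 1 + 1) φ ξ * (x - h - x) ^ (m + 1 + 1) /
        ((m + 1 + 1).factorial : ℝ) ≤ 0 := by
      have := hsign (m + 1 + 1) (Nat.le_add_left 1 _) ξ hξpos
      simp only [Nat.add_sub_cancel] at this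
      rw [show x - h - x = -h by ring, neg_pow h]
      have e : iteratedDeriv (m + 1 + 1) φ ξ * ((-1) ^ (m + 1 + 1) * h ^ (m + 1 + 1)) /
          ((m + 1 + 1).factorial : ℝ) = -(((-1 : ℝ) ^ (m + 1) * iteratedDeriv (m + 1 + 1) φ ξ) *
          h ^ (m + 1 + 1) / ((m + 1 + 1).factorial : ℝ)) := by ring
      rw [e, neg_nonpos]
      positivity
    have hsplit : ∑ k ∈ Finset.range (m + 1 + 1), t k ≤ φ x + t (m + 1) := by
      rw [Finset.sum_range_succ', Finset.sum_range_succ]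
      have h0 : t 0 = φ x := by simp [ht]
      have h1 : ∑ k ∈ Finset.range m, t (k + 1) ≤ 0 := Finset.sum_nonpos fun k _ => htk k
      linarith
    have hφxh : 0 ≤ φ (x - h) := hnn _ (by simp only [mem_Ici]; linarith)
    have habs : |iteratedDeriv (m + 1) φ x| = (-1 : ℝ) ^ m * iteratedDeriv (m + 1) φ x := by
      have hsgn := hsign (m + 1) (Nat.le_add_left 1 m) x (by linarith)
      simp only [Nat.add_sub_cancel] at hsgn
      rw [← abs_of_nonneg hsgn, abs_mul, abs_pow]
      simp
    have hfin : |iteratedDeriv (m + 1) φ x| * h ^ (m + 1) / ((m + 1).factorial : ℝ) =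
        -t (m + 1) := by
      rw [hneg m, neg_neg, habs]
      ring
    rw [hfin]
    linarith

lemma bern_analytic (φ : ℝ → ℝ) (hφ : IsBernstein φ) : AnalyticOnNhd ℝ φ (Ioi 0) := by
  intro u hu
  have hu : 0 < u := hu
  have hmono : MonotoneOn φ (Ici 0) := by
    obtain ⟨hcont, hsm, hnn, hsign⟩ := hφ
    refine monotoneOn_of_deriv_nonneg (convex_Ici 0) hcont ?_ ?_
    · rw [interior_Ici]
      exact hsm.differentiableOn (by simp)
    · intro u hu
      rw [interior_Ici] at hu
      have := hsign 1 le_rfl u hu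
      simpa [iteratedDeriv_one] using this
  have hnn := hφ.2.2.1
  have hsm := hφ.2.1
  set c : ℕ → ℝ := fun k => iteratedDeriv k φ u / (k.factorial : ℝ) with hc
  set M := φ (u + u / 4) with hM
  have hcb : ∀ k : ℕ, |c k| * (u / 2) ^ k ≤ φ u := by
    intro k
    have := bern_deriv_bound φ hφ (x := u) (by positivity : (0:ℝ) < u / 2) (by linarith) k
    rw [hc]
    simp only
    rw [abs_div, Nat.abs_cast]
    calc |iteratedDeriv k φ u| / (k.factorial : ℝ) * (u / 2) ^ k
        = |iteratedDeriv k φ u| * (u / 2) ^ k / (k.factorial : ℝ) := by ring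
      _ ≤ φ u := this
  refine ⟨FormalMultilinearSeries.ofScalars ℝ c, ENNReal.ofReal (u / 4), ?_⟩
  refine ⟨?_, ENNReal.ofReal_pos.2 (by positivity), ?_⟩
  · refine (FormalMultilinearSeries.ofScalars ℝ c).le_radius_of_bound (φ u) fun n => ?_
    rw [FormalMultilinearSeries.ofScalars_norm ℝ c n, Real.coe_toNNReal _ (by positivity),
      Real.norm_eq_abs]
    calc |c n| * (u / 4) ^ n = |c n| * (u / 2) ^ n * (1 / 2) ^ n := by
          rw [mul_assoc, ← mul_pow]; ring_nf
      _ ≤ φ u * 1 := by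
          gcongr
          · exact hnn u (by simp only [mem_Ici]; linarith)
          · exact hcb n
          · exact pow_le_one₀ (by norm_num) (by norm_num)
      _ = φ u := mul_one _
  · intro y hy
    have hy' : edist y 0 < ENNReal.ofReal (u / 4) := hy
    rw [edist_dist, ENNReal.ofReal_lt_ofReal_iff (by positivity), Real.dist_eq, sub_zero] at hy'
    have hyb := abs_lt.1 hy'
    have hS : HasSum (fun n => c n * y ^ n) (φ (u + y)) := by
      have hsumm : Summable (fun n => c n * y ^ n) := by
        refine Summable.of_norm_bounded ((summable_geometric_two).mul_left (φ u)) fun n => ?_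
        rw [Real.norm_eq_abs, abs_mul, abs_pow]
        calc |c n| * |y| ^ n ≤ |c n| * ((u / 2) ^ n * (1 / 2) ^ n) := by
              gcongr
              rw [← mul_pow]
              gcongr
              linarith
          _ = |c n| * (u / 2) ^ n * (1 / 2) ^ n := by ring
          _ ≤ φ u * (1 / 2) ^ n := by gcongr; exact hcb n
      rw [hsumm.hasSum_iff_tendsto_nat, ← Filter.tendsto_add_atTop_iff_nat 1,
        tendsto_iff_norm_sub_tendsto_zero]
      have key : ∀ n : ℕ, |∑ i ∈ Finset.range (n + 1), c i * y ^ i - φ (u + y)| ≤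
          M * (1 / 2) ^ (n + 1) := by
        intro n
        have hM0 : 0 ≤ M := hnn _ (by simp only [mem_Ici]; linarith)
        by_cases hy0 : y = 0
        · subst hy0
          rw [Finset.sum_range_succ']
          simp [hc]
          positivity
        have hne : u ≠ u + y := by intro h; apply hy0; linarith
        have hsub : uIcc u (u + y) ⊆ Ioi 0 := by
          intro t ht
          rcases Set.mem_uIcc.1 ht with ht | ht
          · simp only [mem_Ioi]; linarith [ht.1, ht.2]
          · simp only [mem_Ioi]; linarith [ht.1, ht.2]
        have hf : ContDiffOn ℝ ((n : ℕ) + 1) φ (uIcc u (u + y)) :=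
          (hsm.of_le (by exact_mod_cast (le_top : ((n + 1 : ℕ) : ℕ∞) ≤ ⊤))).mono hsub
        obtain ⟨ξ, hξ, heq⟩ := taylor_mean_remainder_lagrange_iteratedDeriv hne hf
        have hlo : u - u / 4 ≤ min u (u + y) := le_min (by linarith) (by linarith)
        have hhi : max u (u + y) ≤ u + u / 4 := max_le (by linarith) (by linarith)
        have hξ1 := hξ.1
        have hξ2 := hξ.2
        rw [taylor_within_apply] at heq
        have hsum : ∑ k ∈ Finset.range (n + 1), ((k.factorial : ℝ)⁻¹ * (u + y - u) ^ k) •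
            iteratedDerivWithin k φ (uIcc u (u + y)) u =
              ∑ i ∈ Finset.range (n + 1), c i * y ^ i := by
          refine Finset.sum_congr rfl fun k _ => ?_
          rw [iteratedDerivWithin_eq_iteratedDeriv (uniqueDiffOn_uIcc hne)
            ((hsm.contDiffAt (Ioi_mem_nhds hu)).of_le
              (by exact_mod_cast (le_top : ((k : ℕ) : ℕ∞) ≤ ⊤))) left_mem_uIcc, smul_eq_mul,
            add_sub_cancel_left, hc]
          ring
        rw [hsum, add_sub_cancel_left] at heq
        have hb := bern_deriv_bound φ hφ (by positivity : (0:ℝ) < u / 2)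
          (by linarith : u / 2 < ξ) (n + 1)
        have hφξ : φ ξ ≤ M := hmono (by simp only [mem_Ici]; linarith)
          (by simp only [mem_Ici]; linarith) (by linarith)
        rw [abs_sub_comm, heq, abs_div, abs_mul, abs_pow, Nat.abs_cast]
        calc |iteratedDeriv (n + 1) φ ξ| * |y| ^ (n + 1) / ((n + 1).factorial : ℝ)
            ≤ |iteratedDeriv (n + 1) φ ξ| * ((u / 2) ^ (n + 1) * (1 / 2) ^ (n + 1)) /
                ((n + 1).factorial : ℝ) := by
              gcongr
              rw [← mul_pow]
              gcongr
              linarith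
          _ = (|iteratedDeriv (n + 1) φ ξ| * (u / 2) ^ (n + 1) / ((n + 1).factorial : ℝ)) *
                (1 / 2) ^ (n + 1) := by ring
          _ ≤ φ ξ * (1 / 2) ^ (n + 1) := by gcongr
          _ ≤ M * (1 / 2) ^ (n + 1) := by gcongr
      have ht : Filter.Tendsto (fun n : ℕ => M * (1 / 2 : ℝ) ^ (n + 1)) Filter.atTop (nhds 0) := by
        have := ((tendsto_pow_atTop_nhds_zero_of_lt_one (by norm_num : (0:ℝ) ≤ 1 / 2)
          (by norm_num)).comp (Filter.tendsto_add_atTop_nat 1)).const_mul M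
        rw [mul_zero] at this
        exact this
      refine squeeze_zero (fun n => norm_nonneg _) (fun n => ?_) ht
      rw [Real.norm_eq_abs]
      exact key n
    exact hS.congr_fun fun n => by rw [FormalMultilinearSeries.ofScalars_apply_eq, smul_eq_mul]

theorem key_hasSum (φ : ℝ → ℝ) (hφ : IsBernstein φ) (hφ1 : φ 1 = 1)
    (hb : ∀ k : ℕ, bernWeight φ (k + 1) ≤ 1) {x : ℝ} (hx0 : 0 < x) (hx1 : x < 1) :
    HasSum (fun k : ℕ => bernWeight φ (k + 1) * x ^ (k + 1)) (1 - φ (1 - x)) := by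
  obtain ⟨hcont, hsm, hnn, hsign⟩ := hφ
  have hφa : AnalyticOnNhd ℝ φ (Ioi 0) :=
    bern_analytic φ ⟨hcont, hsm, hnn, hsign⟩
  set a : ℕ → ℝ := fun k => if k = 0 then 0 else bernWeight φ k with ha
  have ha_nonneg : ∀ k, 0 ≤ a k := by
    intro k; cases k <;> simp [a, bernWeight_nonneg]
  have ha_le : ∀ k, ‖a k‖ ≤ 1 := by
    intro k
    rw [Real.norm_eq_abs, abs_of_nonneg (ha_nonneg k)]
    cases k with
    | zero => simp [a]
    | succ k => simpa [a] using hb k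
  set p := FormalMultilinearSeries.ofScalars ℝ a with hp
  have hrad : 1 ≤ p.radius := by
    apply ENNReal.le_of_forall_nnreal_lt
    intro r hr
    apply p.le_radius_of_bound 1
    intro n
    have h1 : ‖p n‖ = ‖a n‖ := FormalMultilinearSeries.ofScalars_norm ℝ a n
    have hr1 : (r : ℝ) ≤ 1 := by
      have h2 : r < 1 := by exact_mod_cast hr
      exact_mod_cast h2.le
    rw [h1]
    calc ‖a n‖ * (r : ℝ) ^ n ≤ 1 * 1 ^ n := by
          apply mul_le_mul (ha_le n) (pow_le_pow_left₀ r.coe_nonneg hr1 n)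
            (pow_nonneg r.coe_nonneg n) zero_le_one
      _ = 1 := by norm_num
  have hball : HasFPowerSeriesOnBall p.sum p 0 p.radius :=
    p.hasFPowerSeriesOnBall (lt_of_lt_of_le one_pos hrad)
  have hmem : ∀ y : ℝ, |y| < 1 → y ∈ Metric.eball (0 : ℝ) p.radius := by
    intro y hy
    rw [EMetric.mem_ball, edist_zero_right]
    refine lt_of_lt_of_le ?_ hrad
    have hy' : ‖y‖₊ < 1 := by
      rw [← Real.norm_eq_abs] at hy
      exact_mod_cast hy
    rw [enorm_eq_nnnorm]
    exact_mod_cast hy'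
  -- local Taylor expansion of φ at 1
  obtain ⟨q, hq⟩ := hφa 1 (by norm_num : (1:ℝ) ∈ Ioi 0)
  obtain ⟨sr, hsr⟩ := hq
  have hsum_at : ∀ z : ℝ, edist z (0:ℝ) < sr → |z| < 1 →
      HasSum (fun n => a n * z ^ n) (1 - φ (1 - z)) := by
    intro z hz hz1
    have hmemz : -z ∈ Metric.eball (0 : ℝ) sr := by
      rw [EMetric.mem_ball, edist_zero_right]
      rw [edist_zero_right] at hz
      simpa using hz
    have hs := hsr.hasSum_iteratedFDeriv hmemz
    have hs' : HasSum (fun n => ((n.factorial : ℝ))⁻¹ * ((-z) ^ n * iteratedDeriv n φ 1))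
        (φ (1 - z)) := by
      have e1 : (1 : ℝ) + -z = 1 - z := by ring
      rw [e1] at hs
      refine hs.congr_fun fun n => ?_
      rw [iteratedFDeriv_apply_eq_iteratedDeriv_mul_prod]
      simp [smul_eq_mul, mul_comm]
    have hone : HasSum (fun n : ℕ => if n = 0 then (1:ℝ) else 0) 1 := by
      simpa using hasSum_ite_eq 0 (1:ℝ)
    have hfun : (fun n : ℕ => a n * z ^ n) = fun n : ℕ =>
        (if n = 0 then (1:ℝ) else 0) - ((n.factorial : ℝ))⁻¹ * ((-z) ^ n * iteratedDeriv n φ 1) := by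
      funext n
      cases n with
      | zero => simp [a, iteratedDeriv_zero, hφ1]
      | succ k =>
        have hsgn : 0 ≤ (-1:ℝ) ^ k * iteratedDeriv (k+1) φ 1 := by
          simpa using hsign (k+1) (Nat.le_add_left 1 k) 1 one_pos
        have habs : |iteratedDeriv (k+1) φ 1| = (-1:ℝ) ^ k * iteratedDeriv (k+1) φ 1 := by
          rw [← abs_of_nonneg hsgn, abs_mul, abs_pow]
          simp
        have : a (k+1) = ((-1:ℝ) ^ k * iteratedDeriv (k+1) φ 1) / ((k+1).factorial : ℝ) := by
          simp [a, bernWeight, habs]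
        rw [this, neg_pow, if_neg (Nat.succ_ne_zero k)]
        ring
    rw [hfun]
    exact hone.sub hs'
  -- eventual equality near 0
  have hev : (fun z => 1 - φ (1 - z)) =ᶠ[nhds (0:ℝ)] p.sum := by
    have hball0 : Metric.eball (0:ℝ) (min sr 1) ∈ nhds (0:ℝ) :=
      EMetric.ball_mem_nhds 0 (lt_min hsr.r_pos one_pos)
    filter_upwards [hball0] with z hzmem
    rw [EMetric.mem_ball, lt_min_iff] at hzmem
    have hz1 : |z| < 1 := by
      have := hzmem.2
      rw [edist_zero_right, enorm_eq_nnnorm] at this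
      exact_mod_cast this
    have h1 := hsum_at z hzmem.1 hz1
    have h2 : HasSum (fun n => a n * z ^ n) (p.sum z) := by
      have h3 := hball.hasSum (hmem z hz1)
      rw [zero_add] at h3
      refine h3.congr_fun fun n => ?_
      rw [hp, FormalMultilinearSeries.ofScalars_apply_eq, smul_eq_mul]
    exact h1.unique h2
  -- identity theorem on Ioo (-1) 1
  have hFan : AnalyticOnNhd ℝ (fun z => 1 - φ (1 - z)) (Ioo (-1:ℝ) 1) := by
    intro z hz
    have h1 : AnalyticAt ℝ φ (1 - z) := hφa _ (by simp only [mem_Ioi]; linarith [hz.2])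
    have h2 : AnalyticAt ℝ (fun w : ℝ => 1 - w) z := analyticAt_const.sub analyticAt_id
    exact analyticAt_const.sub (h1.comp h2)
  have hGan : AnalyticOnNhd ℝ p.sum (Ioo (-1:ℝ) 1) := fun z hz =>
    hball.analyticAt_of_mem (hmem z (abs_lt.2 ⟨hz.1, hz.2⟩))
  have heq : EqOn (fun z => 1 - φ (1 - z)) p.sum (Ioo (-1:ℝ) 1) :=
    hFan.eqOn_of_preconnected_of_eventuallyEq hGan ((convex_Ioo _ _).isPreconnected)
      (by constructor <;> norm_num) hev
  -- conclude at x
  have hxI : x ∈ Ioo (-1:ℝ) 1 := ⟨by linarith, hx1⟩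
  have hsx : HasSum (fun n => a n * x ^ n) (1 - φ (1 - x)) := by
    have h3 := hball.hasSum (hmem x (abs_lt.2 ⟨hxI.1, hxI.2⟩))
    rw [zero_add] at h3
    have h4 : HasSum (fun n => a n * x ^ n) (p.sum x) := by
      refine h3.congr_fun fun n => ?_
      rw [hp, FormalMultilinearSeries.ofScalars_apply_eq, smul_eq_mul]
    rwa [← heq hxI] at h4
  have h5 := (hasSum_nat_add_iff (f := fun n => a n * x ^ n) 1).2 (by simpa [ha] using hsx)
  refine h5.congr_fun fun k => ?_
  simp [a]

lemma min1_add {a b : ℝ} (ha : 0 ≤ a) (hb : 0 ≤ b) :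
    min 1 (a + b) ≤ min 1 a + min 1 b := by
  rcases le_total 1 a with h | h
  · have h1 : min 1 a = 1 := min_eq_left h
    have h2 : (0:ℝ) ≤ min 1 b := le_min zero_le_one hb
    have h3 : min 1 (a + b) ≤ 1 := min_le_left _ _
    linarith
  · rcases le_total 1 b with h' | h'
    · have h1 : min 1 b = 1 := min_eq_left h'
      have h2 : (0:ℝ) ≤ min 1 a := le_min zero_le_one ha
      have h3 : min 1 (a + b) ≤ 1 := min_le_left _ _
      linarith
    · have h1 : min 1 a = a := min_eq_right h
      have h2 : min 1 b = b := min_eq_right h'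
      have h3 : min 1 (a + b) ≤ a + b := min_le_right _ _
      linarith

lemma min1_sum (n : ℕ) (f : ℕ → ℝ) (hf : ∀ j, 0 ≤ f j) :
    min 1 (∑ j ∈ Finset.range n, f j) ≤ ∑ j ∈ Finset.range n, min 1 (f j) := by
  induction n with
  | zero => simp
  | succ m ih =>
    rw [Finset.sum_range_succ, Finset.sum_range_succ]
    calc min 1 (∑ j ∈ Finset.range m, f j + f m)
        ≤ min 1 (∑ j ∈ Finset.range m, f j) + min 1 (f m) :=
          min1_add (Finset.sum_nonneg fun j _ => hf j) (hf m)
      _ ≤ _ := by gcongr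

lemma one_lt_exp_one : (1:ℝ) < Real.exp 1 := by
  have := Real.add_one_le_exp (1:ℝ)
  linarith

lemma K_mul_exp : Real.exp 1 / (Real.exp 1 - 1) * (1 - Real.exp (-1)) = 1 := by
  have he := one_lt_exp_one
  rw [Real.exp_neg]
  have h0 : Real.exp 1 ≠ 0 := by positivity
  have h1 : Real.exp 1 - 1 ≠ 0 := by linarith
  field_simp

lemma min1_le_exp {y : ℝ} (hy : 0 ≤ y) :
    min 1 y ≤ Real.exp 1 / (Real.exp 1 - 1) * (1 - Real.exp (-y)) := by
  have he := one_lt_exp_one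
  have hK : 0 < Real.exp 1 / (Real.exp 1 - 1) := by
    apply div_pos (Real.exp_pos 1); linarith
  rcases le_total 1 y with h | h
  · rw [min_eq_left h]
    have h1 : Real.exp (-y) ≤ Real.exp (-1) := Real.exp_le_exp.2 (by linarith)
    calc (1:ℝ) = Real.exp 1 / (Real.exp 1 - 1) * (1 - Real.exp (-1)) := K_mul_exp.symm
      _ ≤ Real.exp 1 / (Real.exp 1 - 1) * (1 - Real.exp (-y)) := by
          apply mul_le_mul_of_nonneg_left (by linarith) hK.le
  · rw [min_eq_right h]
    have hc := convexOn_exp.2 (Set.mem_univ (0:ℝ)) (Set.mem_univ (-1:ℝ))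
      (by linarith : (0:ℝ) ≤ 1 - y) hy (by ring)
    have hc' : Real.exp (-y) ≤ (1 - y) + y * Real.exp (-1) := by
      have e1 : (1-y) • (0:ℝ) + y • (-1:ℝ) = -y := by simp
      rw [e1] at hc
      simpa [Real.exp_zero, smul_eq_mul] using hc
    have h2 : y * (1 - Real.exp (-1)) ≤ 1 - Real.exp (-y) := by linarith
    calc y = Real.exp 1 / (Real.exp 1 - 1) * (1 - Real.exp (-1)) * y := by
          rw [K_mul_exp]; ring
      _ = Real.exp 1 / (Real.exp 1 - 1) * (y * (1 - Real.exp (-1))) := by ring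
      _ ≤ Real.exp 1 / (Real.exp 1 - 1) * (1 - Real.exp (-y)) :=
          mul_le_mul_of_nonneg_left h2 hK.le

lemma bern_mono (φ : ℝ → ℝ) (hφ : IsBernstein φ) : MonotoneOn φ (Ici 0) := by
  obtain ⟨hcont, hsm, hnn, hsign⟩ := hφ
  refine monotoneOn_of_deriv_nonneg (convex_Ici 0) hcont ?_ ?_
  · rw [interior_Ici]
    exact hsm.differentiableOn (by simp)
  · intro u hu
    rw [interior_Ici] at hu
    have := hsign 1 le_rfl u hu
    simpa [iteratedDeriv_one] using this

set_option maxHeartbeats 1000000 in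
theorem discrete_subordinator_min_upper_bound
    (φ : ℝ → ℝ) (hφ : IsBernstein φ) (hφ0 : φ 0 = 0) (hφ1 : φ 1 = 1)
    {Ω : Type*} [MeasureSpace Ω] [IsProbabilityMeasure (volume : Measure Ω)]
    (R : ℕ → Ω → ℕ) (hmeas : ∀ j, Measurable (R j))
    (hindep : ProbabilityTheory.iIndepFun R volume)
    (hpos : ∀ j ω, 1 ≤ R j ω)
    (hdist : ∀ j k, 1 ≤ k → volume {ω | R j ω = k} = ENNReal.ofReal (bernWeight φ k))
    (T : ℕ → Ω → ℕ) (hT : ∀ n ω, T n ω = ∑ j ∈ Finset.range n, R j ω) :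
    ∀ C : ℝ, 0 < C → ∀ n : ℕ, 1 ≤ n →
      ((∫ ω, min 1 (C * (T n ω : ℝ))) ≤
        Real.exp 1 / (Real.exp 1 - 1) * min 1 ((n : ℝ) * φ C)) ∧
      ∀ r : ℝ, 0 < r →
        (volume {ω | r ≤ (T n ω : ℝ)}).toReal ≤
          min 1 (Real.exp 1 / (Real.exp 1 - 1) * ((n : ℝ) * φ (1 / r))) := by
  have he := one_lt_exp_one
  set K := Real.exp 1 / (Real.exp 1 - 1) with hKdef
  have hK1 : 1 ≤ K := by
    rw [hKdef, le_div_iff₀ (by linarith : (0:ℝ) < Real.exp 1 - 1)]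
    linarith
  have hKpos : (0:ℝ) < K := lt_of_lt_of_le one_pos hK1
  -- total mass of the weights
  have htot : ∑' k : ℕ, ENNReal.ofReal (bernWeight φ (k + 1)) = 1 := by
    have hmeasset : ∀ k : ℕ, MeasurableSet {ω | R 0 ω = k + 1} := fun k =>
      hmeas 0 (measurableSet_singleton (k + 1))
    have hdisj : Pairwise (Function.onFun Disjoint fun k : ℕ => {ω | R 0 ω = k + 1}) := by
      intro i j hij
      refine Set.disjoint_left.2 fun ω h1 h2 => hij ?_
      simp only [mem_setOf_eq] at h1 h2
      omega
    have hunion : (⋃ k : ℕ, {ω | R 0 ω = k + 1}) = univ := by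
      ext ω
      simp only [mem_iUnion, mem_setOf_eq, mem_univ, iff_true]
      exact ⟨R 0 ω - 1, by have := hpos 0 ω; omega⟩
    calc ∑' k : ℕ, ENNReal.ofReal (bernWeight φ (k + 1))
        = ∑' k : ℕ, volume {ω | R 0 ω = k + 1} := by
          refine tsum_congr fun k => ?_
          rw [hdist 0 (k + 1) (Nat.le_add_left 1 k)]
      _ = volume (⋃ k : ℕ, {ω | R 0 ω = k + 1}) := (measure_iUnion hdisj hmeasset).symm
      _ = 1 := by rw [hunion, measure_univ]
  have hble : ∀ k : ℕ, bernWeight φ (k + 1) ≤ 1 := by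
    intro k
    have h1 : ENNReal.ofReal (bernWeight φ (k + 1)) ≤ 1 := htot ▸ ENNReal.le_tsum k
    exact (ENNReal.ofReal_le_one).1 h1
  have hmono := bern_mono φ hφ
  have hnn := hφ.2.2.1
  -- the key single-variable bound
  have hsingle : ∀ C : ℝ, 0 < C →
      ∑' k : ℕ, ENNReal.ofReal (min 1 (C * ((k:ℝ) + 1)) * bernWeight φ (k + 1)) ≤
        ENNReal.ofReal (K * φ C) := by
    intro C hC
    set x := Real.exp (-C) with hxdef
    have hx0 : 0 < x := Real.exp_pos _
    have hx1 : x < 1 := by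
      rw [hxdef, Real.exp_lt_one_iff]; linarith
    have hksum := key_hasSum φ hφ hφ1 hble hx0 hx1
    have hterm : ∀ k : ℕ, min 1 (C * ((k:ℝ) + 1)) * bernWeight φ (k + 1) ≤
        K * ((1 - x ^ (k + 1)) * bernWeight φ (k + 1)) := by
      intro k
      have hy : (0:ℝ) ≤ C * ((k:ℝ) + 1) := by positivity
      have h1 := min1_le_exp hy
      have h2 : Real.exp (-(C * ((k:ℝ) + 1))) = x ^ (k + 1) := by
        rw [hxdef, ← Real.exp_nat_mul]
        congr 1
        push_cast
        ring
      rw [h2] at h1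
      calc min 1 (C * ((k:ℝ) + 1)) * bernWeight φ (k + 1)
          ≤ (K * (1 - x ^ (k + 1))) * bernWeight φ (k + 1) :=
            mul_le_mul_of_nonneg_right h1 (bernWeight_nonneg φ _)
        _ = K * ((1 - x ^ (k + 1)) * bernWeight φ (k + 1)) := by ring
    have hxpow : ∀ k : ℕ, (0:ℝ) ≤ 1 - x ^ (k + 1) := by
      intro k
      have : x ^ (k + 1) ≤ 1 := pow_le_one₀ hx0.le hx1.le
      linarith
    have hA : ∑' k : ℕ, ENNReal.ofReal ((1 - x ^ (k + 1)) * bernWeight φ (k + 1)) ≤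
        ENNReal.ofReal (φ C) := by
      have hB : ∑' k : ℕ, ENNReal.ofReal (bernWeight φ (k + 1) * x ^ (k + 1)) =
          ENNReal.ofReal (1 - φ (1 - x)) := by
        rw [← ENNReal.ofReal_tsum_of_nonneg
          (fun k => mul_nonneg (bernWeight_nonneg φ _) (pow_nonneg hx0.le _)) hksum.summable,
          hksum.tsum_eq]
      have hsplit : (∑' k : ℕ, ENNReal.ofReal ((1 - x ^ (k + 1)) * bernWeight φ (k + 1))) +
          (∑' k : ℕ, ENNReal.ofReal (bernWeight φ (k + 1) * x ^ (k + 1))) = 1 := by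
        rw [← ENNReal.tsum_add, ← htot]
        refine tsum_congr fun k => ?_
        rw [← ENNReal.ofReal_add (mul_nonneg (hxpow k) (bernWeight_nonneg φ _))
          (mul_nonneg (bernWeight_nonneg φ _) (pow_nonneg hx0.le _))]
        congr 1
        ring
      have hphi1x_le : φ (1 - x) ≤ 1 := by
        have h1 : (1 - x) ∈ Ici (0:ℝ) := by simp; linarith
        have h2 : (1:ℝ) ∈ Ici (0:ℝ) := by simp
        have := hmono h1 h2 (by linarith)
        rwa [hφ1] at this
      have hphi1x_nn : 0 ≤ φ (1 - x) := hnn _ (by simp; linarith)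
      have heq1 : ∑' k : ℕ, ENNReal.ofReal ((1 - x ^ (k + 1)) * bernWeight φ (k + 1)) =
          1 - ENNReal.ofReal (1 - φ (1 - x)) := by
        rw [← hB]
        exact ENNReal.eq_sub_of_add_eq (by rw [hB]; exact ENNReal.ofReal_ne_top) hsplit
      rw [heq1]
      have heq2 : (1:ℝ≥0∞) - ENNReal.ofReal (1 - φ (1 - x)) = ENNReal.ofReal (φ (1 - x)) := by
        rw [← ENNReal.ofReal_one, ← ENNReal.ofReal_sub _ (by linarith : (0:ℝ) ≤ 1 - φ (1 - x))]
        congr 1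
        ring
      rw [heq2]
      apply ENNReal.ofReal_le_ofReal
      have hxC : 1 - x ≤ C := by
        have := Real.add_one_le_exp (-C)
        rw [hxdef]; linarith
      exact hmono (by simp; linarith) (by simp [hC.le]) hxC
    calc ∑' k : ℕ, ENNReal.ofReal (min 1 (C * ((k:ℝ) + 1)) * bernWeight φ (k + 1))
        ≤ ∑' k : ℕ, ENNReal.ofReal (K * ((1 - x ^ (k + 1)) * bernWeight φ (k + 1))) :=
          ENNReal.tsum_le_tsum fun k => ENNReal.ofReal_le_ofReal (hterm k)
      _ = ENNReal.ofReal K * ∑' k : ℕ, ENNReal.ofReal ((1 - x ^ (k+1)) * bernWeight φ (k+1)) := by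
          rw [← ENNReal.tsum_mul_left]
          refine tsum_congr fun k => ?_
          rw [ENNReal.ofReal_mul hKpos.le]
      _ ≤ ENNReal.ofReal K * ENNReal.ofReal (φ C) := by
          exact mul_le_mul_right hA _
      _ = ENNReal.ofReal (K * φ C) := by
          rw [← ENNReal.ofReal_mul hKpos.le]
  -- lintegral of a single variable
  have hlint_single : ∀ C : ℝ, 0 < C → ∀ j : ℕ,
      (∫⁻ ω, ENNReal.ofReal (min 1 (C * (R j ω : ℝ)))) =
        ∑' k : ℕ, ENNReal.ofReal (min 1 (C * ((k:ℝ) + 1)) * bernWeight φ (k + 1)) := by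
    intro C hC j
    set g : ℕ → ℝ≥0∞ := fun k => ENNReal.ofReal (min 1 (C * (k:ℝ))) with hgdef
    have hgmeas : Measurable g := measurable_from_top
    calc (∫⁻ ω, ENNReal.ofReal (min 1 (C * (R j ω : ℝ))))
        = ∫⁻ k, g k ∂(volume.map (R j)) := (lintegral_map hgmeas (hmeas j)).symm
      _ = ∑' k : ℕ, g k * (volume.map (R j)) {k} := lintegral_countable' g
      _ = ∑' k : ℕ, g k * volume (R j ⁻¹' {k}) := by
          refine tsum_congr fun k => ?_
          rw [Measure.map_apply (hmeas j) (measurableSet_singleton k)]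
      _ = ∑' k : ℕ, ENNReal.ofReal (min 1 (C * ((k:ℝ) + 1)) * bernWeight φ (k + 1)) := by
          rw [tsum_eq_zero_add' ENNReal.summable]
          have h0 : R j ⁻¹' {0} = ∅ := by
            ext ω; simp only [mem_preimage, mem_singleton_iff, mem_empty_iff_false, iff_false]
            have := hpos j ω; omega
          rw [h0]
          simp only [measure_empty, mul_zero, zero_add]
          refine tsum_congr fun k => ?_
          have hpre : R j ⁻¹' {k + 1} = {ω | R j ω = k + 1} := rfl
          rw [hpre, hdist j (k + 1) (Nat.le_add_left 1 k), hgdef]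
          rw [← ENNReal.ofReal_mul (le_min zero_le_one (by positivity))]
          push_cast
          ring_nf
  -- measurability facts
  intro C hC n hn
  have hTfun : ∀ m : ℕ, (fun ω => T m ω) = fun ω => ∑ j ∈ Finset.range m, R j ω :=
    fun m => funext (hT m)
  have hTmeasN : Measurable (T n) := by
    have h := hTfun n
    rw [show T n = fun ω => ∑ j ∈ Finset.range n, R j ω from h]
    exact Finset.measurable_sum _ fun j _ => hmeas j
  have hTmeas : Measurable fun ω => (T n ω : ℝ) := measurable_from_top.comp hTmeasN
  -- main lintegral bound, for any C' > 0
  have hIb : ∀ C' : ℝ, 0 < C' →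
      (∫⁻ ω, ENNReal.ofReal (min 1 (C' * (T n ω : ℝ)))) ≤
        (n : ℝ≥0∞) * ENNReal.ofReal (K * φ C') := by
    intro C' hC'
    have hpt : ∀ ω, min 1 (C' * (T n ω : ℝ)) ≤
        ∑ j ∈ Finset.range n, min 1 (C' * (R j ω : ℝ)) := by
      intro ω
      have h1 : (T n ω : ℝ) = ∑ j ∈ Finset.range n, (R j ω : ℝ) := by
        rw [hT n ω]; push_cast; rfl
      rw [h1, Finset.mul_sum]
      exact min1_sum n _ fun j => by positivity
    calc (∫⁻ ω, ENNReal.ofReal (min 1 (C' * (T n ω : ℝ))))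
        ≤ ∫⁻ ω, ∑ j ∈ Finset.range n, ENNReal.ofReal (min 1 (C' * (R j ω : ℝ))) := by
          refine lintegral_mono fun ω => ?_
          calc ENNReal.ofReal (min 1 (C' * (T n ω : ℝ)))
              ≤ ENNReal.ofReal (∑ j ∈ Finset.range n, min 1 (C' * (R j ω : ℝ))) :=
                ENNReal.ofReal_le_ofReal (hpt ω)
            _ ≤ ∑ j ∈ Finset.range n, ENNReal.ofReal (min 1 (C' * (R j ω : ℝ))) := by
                rw [ENNReal.ofReal_sum_of_nonneg fun j _ => le_min zero_le_one (by positivity)]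
      _ = ∑ j ∈ Finset.range n, ∫⁻ ω, ENNReal.ofReal (min 1 (C' * (R j ω : ℝ))) := by
          refine lintegral_finset_sum _ fun j _ => ?_
          exact (measurable_const.min ((measurable_from_top.comp (hmeas j)).const_mul C')).ennreal_ofReal
      _ ≤ ∑ j ∈ Finset.range n, ENNReal.ofReal (K * φ C') := by
          refine Finset.sum_le_sum fun j _ => ?_
          rw [hlint_single C' hC' j]
          exact hsingle C' hC'
      _ = (n : ℝ≥0∞) * ENNReal.ofReal (K * φ C') := by
          rw [Finset.sum_const, Finset.card_range, nsmul_eq_mul]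
  have hKφC : ∀ C' : ℝ, 0 ≤ C' → 0 ≤ K * φ C' := fun C' h =>
    mul_nonneg hKpos.le (hnn C' h)
  have hfin : ∀ C' : ℝ, (n : ℝ≥0∞) * ENNReal.ofReal (K * φ C') ≠ ⊤ :=
    fun C' => ENNReal.mul_ne_top (ENNReal.natCast_ne_top n) ENNReal.ofReal_ne_top
  have htoReal : ∀ C' : ℝ, 0 ≤ C' →
      ((n : ℝ≥0∞) * ENNReal.ofReal (K * φ C')).toReal = K * ((n:ℝ) * φ C') := by
    intro C' h
    rw [ENNReal.toReal_mul, ENNReal.toReal_natCast, ENNReal.toReal_ofReal (hKφC C' h)]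
    ring
  constructor
  · -- expectation bound
    have hfm : Measurable fun ω => min 1 (C * (T n ω : ℝ)) :=
      measurable_const.min (hTmeas.const_mul C)
    have hnonneg : ∀ ω, 0 ≤ min 1 (C * (T n ω : ℝ)) := fun ω =>
      le_min zero_le_one (by positivity)
    have hInt : (∫ ω, min 1 (C * (T n ω : ℝ))) =
        (∫⁻ ω, ENNReal.ofReal (min 1 (C * (T n ω : ℝ)))).toReal := by
      rw [integral_eq_lintegral_of_nonneg_ae (ae_of_all _ hnonneg) hfm.aestronglyMeasurable]
    have hb2 : (∫⁻ ω, ENNReal.ofReal (min 1 (C * (T n ω : ℝ)))) ≤ 1 := by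
      calc (∫⁻ ω, ENNReal.ofReal (min 1 (C * (T n ω : ℝ))))
          ≤ ∫⁻ _, 1 := lintegral_mono fun ω => ENNReal.ofReal_le_one.2 (min_le_left _ _)
        _ = 1 := by rw [lintegral_one, measure_univ]
    rcases le_total ((n:ℝ) * φ C) 1 with h | h
    · rw [min_eq_right h, hInt]
      calc (∫⁻ ω, ENNReal.ofReal (min 1 (C * (T n ω : ℝ)))).toReal
          ≤ ((n : ℝ≥0∞) * ENNReal.ofReal (K * φ C)).toReal :=
            ENNReal.toReal_mono (hfin C) (hIb C hC)
        _ = K * ((n:ℝ) * φ C) := htoReal C hC.le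
    · rw [min_eq_left h, hInt, mul_one]
      calc (∫⁻ ω, ENNReal.ofReal (min 1 (C * (T n ω : ℝ)))).toReal
          ≤ (1 : ℝ≥0∞).toReal := ENNReal.toReal_mono (by simp) hb2
        _ = 1 := by simp
        _ ≤ K := hK1
  · -- tail bound
    intro r hr
    have hC' : 0 < 1 / r := by positivity
    have hSmeas : MeasurableSet {ω | r ≤ (T n ω : ℝ)} :=
      measurableSet_le measurable_const hTmeas
    have h1 : volume {ω | r ≤ (T n ω : ℝ)} ≤
        ∫⁻ ω, ENNReal.ofReal (min 1 ((1/r) * (T n ω : ℝ))) := by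
      rw [← lintegral_indicator_one hSmeas]
      refine lintegral_mono fun ω => ?_
      by_cases hω : ω ∈ {ω | r ≤ (T n ω : ℝ)}
      · rw [Set.indicator_of_mem hω]
        have hge : (1:ℝ) ≤ (1/r) * (T n ω : ℝ) := by
          rw [mem_setOf_eq] at hω
          calc (1:ℝ) = (1/r) * r := by field_simp
            _ ≤ (1/r) * (T n ω : ℝ) := by
                apply mul_le_mul_of_nonneg_left hω (by positivity)
        have : min 1 ((1/r) * (T n ω : ℝ)) = 1 := min_eq_left hge
        rw [this]
        simp
      · rw [Set.indicator_of_notMem hω]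
        exact zero_le
    have h2 := (h1.trans (hIb (1/r) hC'))
    refine le_min ?_ ?_
    · calc (volume {ω | r ≤ (T n ω : ℝ)}).toReal
          ≤ (1 : ℝ≥0∞).toReal := ENNReal.toReal_mono (by simp) prob_le_one
        _ = 1 := by simp
    · calc (volume {ω | r ≤ (T n ω : ℝ)}).toReal
          ≤ ((n : ℝ≥0∞) * ENNReal.ofReal (K * φ (1/r))).toReal :=
            ENNReal.toReal_mono (hfin (1/r)) h2
        _ = K * ((n:ℝ) * φ (1/r)) := htoReal (1/r) hC'.le
end
end

section
/- Let φ be a Bernstein function with φ(0) = 0 such that φ(λθ) ≤ C·λ^β·φ(θ) for all λ ∈ (0,1] and all θ > 0, for some β ∈ (0,1] and C ≥ 1 (global weak lower scaling), and for t > 0 let μ_t be the Borel probability measure on [0,∞) with Laplace transform e^{−t·φ(λ)}. Then for each d ∈ ℕ there exists a constant C_d > 0 such that ∫_{(0,∞)} s^{−d/2} μ_t(ds) ≤ C_d · (φ^{−1}(1/t))^{d/2} for all t > 0, where φ^{−1}(u) = inf{λ > 0 : φ(λ) ≥ u}. -/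
open MeasureTheory Real Set

noncomputable section

/-- Generalized right-continuous inverse: `φ⁻¹(u) = inf {l > 0 : φ(l) ≥ u}`. -/
def genInv (φ : ℝ → ℝ) (u : ℝ) : ℝ := sInf {l : ℝ | 0 < l ∧ u ≤ φ l}

/-- Weak lower scaling implies that `φ` takes arbitrarily large values, as soon as it is
positive somewhere. -/
lemma aux_exists_ge {φ : ℝ → ℝ} {β C : ℝ} (hβ0 : 0 < β) (hC0 : 0 < C)
    (hscal : ∀ l : ℝ, 0 < l → l ≤ 1 → ∀ θ : ℝ, 0 < θ → φ (l * θ) ≤ C * l ^ β * φ θ)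
    {θ0 : ℝ} (hθ0 : 0 < θ0) (hφθ0 : 0 < φ θ0) {M : ℝ} (hM : 0 < M) :
    ∃ l : ℝ, 0 < l ∧ M ≤ φ l := by
  set k : ℝ := (C * M / φ θ0) ^ (1 / β) with hkdef
  have hk0 : 0 ≤ k := Real.rpow_nonneg (by positivity) _
  set m : ℝ := max 1 k with hmdef
  have hm1 : (1 : ℝ) ≤ m := le_max_left _ _
  have hm0 : (0 : ℝ) < m := lt_of_lt_of_le one_pos hm1
  refine ⟨θ0 * m, by positivity, ?_⟩
  have hminv : m⁻¹ ≤ 1 := by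
    rw [inv_le_one_iff₀]; right; exact hm1
  have hsc := hscal m⁻¹ (by positivity) hminv (θ0 * m) (by positivity)
  have heq : m⁻¹ * (θ0 * m) = θ0 := by field_simp
  rw [heq] at hsc
  have hXpos : (0 : ℝ) < m ^ β := Real.rpow_pos_of_pos hm0 _
  rw [Real.inv_rpow hm0.le] at hsc
  have hkβ : k ^ β = C * M / φ θ0 := by
    rw [hkdef, ← Real.rpow_mul (by positivity), one_div, inv_mul_cancel₀ hβ0.ne',
      Real.rpow_one]
  have hkm : k ^ β ≤ m ^ β := Real.rpow_le_rpow hk0 (le_max_right _ _) hβ0.le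
  have h2 : φ θ0 * m ^ β ≤ C * φ (θ0 * m) := by
    calc φ θ0 * m ^ β ≤ C * (m ^ β)⁻¹ * φ (θ0 * m) * m ^ β :=
          mul_le_mul_of_nonneg_right hsc hXpos.le
      _ = C * φ (θ0 * m) * ((m ^ β)⁻¹ * m ^ β) := by ring
      _ = C * φ (θ0 * m) := by rw [inv_mul_cancel₀ hXpos.ne', mul_one]
  have h3 : C * M ≤ C * φ (θ0 * m) := by
    calc C * M = φ θ0 * (C * M / φ θ0) := by field_simp
      _ = φ θ0 * k ^ β := by rw [hkβ]
      _ ≤ φ θ0 * m ^ β := mul_le_mul_of_nonneg_left hkm hφθ0.le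
      _ ≤ C * φ (θ0 * m) := h2
  exact le_of_mul_le_mul_left h3 hC0

/-- Small-ball estimate from the Laplace transform. -/
lemma smallBall_aux {φ : ℝ → ℝ} (μt : Measure ℝ) [IsProbabilityMeasure μt] {t : ℝ}
    (hlap : ∀ l : ℝ, 0 ≤ l → (∫ s, Real.exp (-l * s) ∂μt) = Real.exp (-t * φ l))
    {x : ℝ} (hx : 0 < x) :
    μt (Set.Ioc 0 x) ≤ ENNReal.ofReal (Real.exp 1 * Real.exp (-(t * φ x⁻¹))) := by
  have hl : (0 : ℝ) ≤ x⁻¹ := by positivity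
  have hlx := hlap x⁻¹ hl
  have hint : Integrable (fun s => Real.exp (-x⁻¹ * s)) μt := by
    by_contra hni
    rw [integral_undef hni] at hlx
    exact (Real.exp_pos _).ne' hlx.symm
  have hconst : ∀ s ∈ Set.Ioc 0 x, Real.exp (-1) ≤ Real.exp (-x⁻¹ * s) := by
    intro s hs
    apply Real.exp_le_exp.mpr
    have h1 : x⁻¹ * s ≤ x⁻¹ * x := mul_le_mul_of_nonneg_left hs.2 (by positivity)
    rw [inv_mul_cancel₀ hx.ne'] at h1
    linarith
  have h1 : Real.exp (-1) * (μt (Set.Ioc 0 x)).toReal ≤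
      ∫ s in Set.Ioc 0 x, Real.exp (-x⁻¹ * s) ∂μt :=
    setIntegral_ge_of_const_le_real measurableSet_Ioc (measure_ne_top _ _) hconst
      hint.integrableOn
  have h2 : ∫ s in Set.Ioc 0 x, Real.exp (-x⁻¹ * s) ∂μt ≤ ∫ s, Real.exp (-x⁻¹ * s) ∂μt :=
    setIntegral_le_integral hint (Filter.Eventually.of_forall fun s => (Real.exp_pos _).le)
  have h3 : (μt (Set.Ioc 0 x)).toReal ≤ Real.exp 1 * Real.exp (-(t * φ x⁻¹)) := by
    have h4 : Real.exp (-1) * (μt (Set.Ioc 0 x)).toReal ≤ Real.exp (-(t * φ x⁻¹)) := by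
      have := h1.trans (h2.trans_eq hlx)
      rwa [neg_mul] at this
    calc (μt (Set.Ioc 0 x)).toReal
        = Real.exp 1 * (Real.exp (-1) * (μt (Set.Ioc 0 x)).toReal) := by
          rw [← mul_assoc, ← Real.exp_add]; norm_num
      _ ≤ Real.exp 1 * Real.exp (-(t * φ x⁻¹)) :=
          mul_le_mul_of_nonneg_left h4 (Real.exp_pos _).le
  calc μt (Set.Ioc 0 x) = ENNReal.ofReal (μt (Set.Ioc 0 x)).toReal :=
        (ENNReal.ofReal_toReal (measure_ne_top _ _)).symm
    _ ≤ _ := ENNReal.ofReal_le_ofReal h3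

theorem subordinator_negative_moment_bound
    (φ : ℝ → ℝ) (hφ : IsBernstein φ) (hφ0 : φ 0 = 0)
    (β C : ℝ) (hβ0 : 0 < β) (hβ1 : β ≤ 1) (hC : 1 ≤ C)
    (hscal : ∀ l : ℝ, 0 < l → l ≤ 1 → ∀ θ : ℝ, 0 < θ → φ (l * θ) ≤ C * l ^ β * φ θ)
    (μ : ℝ → Measure ℝ) (hμ : IsSubordinatorLaw φ μ)
    (d : ℕ) :
    ∃ C_d : ℝ, 0 < C_d ∧ ∀ t : ℝ, 0 < t →
      (∫⁻ s in Set.Ioi (0 : ℝ), ENNReal.ofReal (s ^ (-(d : ℝ) / 2)) ∂μ t) ≤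
        ENNReal.ofReal (C_d * genInv φ (1 / t) ^ ((d : ℝ) / 2)) := by
  classical
  have hC0 : (0 : ℝ) < C := lt_of_lt_of_le one_pos hC
  -- trivial case d = 0
  rcases Nat.eq_zero_or_pos d with rfl | hd
  · refine ⟨1, one_pos, fun t ht => ?_⟩
    have hprob := (hμ t ht).1
    simp only [Nat.cast_zero, neg_zero, zero_div, Real.rpow_zero, ENNReal.ofReal_one, one_mul]
    rw [setLIntegral_one]
    exact prob_le_one
  -- degenerate case: φ vanishes on (0, ∞)
  by_cases hdeg : ∀ θ : ℝ, 0 < θ → φ θ = 0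
  · refine ⟨1, one_pos, fun t ht => ?_⟩
    obtain ⟨hprob, hnull, hlap⟩ := hμ t ht
    have hφ1 : φ 1 = 0 := hdeg 1 one_pos
    have hlx := hlap 1 zero_le_one
    rw [hφ1, mul_zero, Real.exp_zero] at hlx
    have hint : Integrable (fun s => Real.exp (-1 * s)) (μ t) := by
      by_contra hni
      rw [integral_undef hni] at hlx
      exact one_ne_zero hlx.symm
    have hae0 : ∀ᵐ s ∂μ t, 0 ≤ s := by
      rw [ae_iff]
      have hset : {s : ℝ | ¬ 0 ≤ s} = Set.Iio 0 := by ext s; simp [not_le]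
      rw [hset]; exact hnull
    have hg_int : Integrable (fun s => 1 - Real.exp (-1 * s)) (μ t) :=
      (integrable_const 1).sub hint
    have hg_nn : 0 ≤ᵐ[μ t] fun s => 1 - Real.exp (-1 * s) := by
      filter_upwards [hae0] with s hs
      have hle : Real.exp (-1 * s) ≤ 1 := Real.exp_le_one_iff.mpr (by nlinarith)
      simp only [Pi.zero_apply]
      linarith
    have hg0 : ∫ s, (1 - Real.exp (-1 * s)) ∂μ t = 0 := by
      rw [integral_sub (integrable_const 1) hint, hlx, integral_const]
      simp [measure_univ]
    have hgz := (integral_eq_zero_iff_of_nonneg_ae hg_nn hg_int).mp hg0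
    have hae : ∀ᵐ s ∂μ t, s ∉ Set.Ioi 0 := by
      filter_upwards [hgz] with s hs hmem
      simp only [Pi.zero_apply] at hs
      have h1 : Real.exp (-1 * s) = 1 := by linarith
      have h2 : -1 * s = 0 := by rwa [Real.exp_eq_one_iff] at h1
      have : (0 : ℝ) < s := hmem
      linarith
    have hz : μ t (Set.Ioi 0) = 0 := measure_eq_zero_iff_ae_notMem.mpr hae
    rw [Measure.restrict_eq_zero.mpr hz, lintegral_zero_measure]
    exact zero_le
  -- main case
  push_neg at hdeg
  obtain ⟨θ0, hθ0pos, hφθ0ne⟩ := hdeg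
  have hφθ0 : 0 < φ θ0 := lt_of_le_of_ne (hφ.2.2.1 θ0 hθ0pos.le) (Ne.symm hφθ0ne)
  set n : ℕ := ⌈(d : ℝ) / β⌉₊ with hn
  set K : ℝ := Real.exp 1 * (n.factorial : ℝ) * C ^ n with hK
  have hK0 : 0 < K := by positivity
  refine ⟨(2 : ℝ) ^ ((d : ℝ) / 2) * (1 + K), by positivity, fun t ht => ?_⟩
  obtain ⟨hprob, hnull, hlap⟩ := hμ t ht
  haveI := hprob
  have hd0 : (0 : ℝ) < (d : ℝ) := by exact_mod_cast hd
  set c : ℝ := -(d : ℝ) / 2 with hc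
  set S : Set ℝ := {l : ℝ | 0 < l ∧ 1 / t ≤ φ l} with hS
  have hSne : S.Nonempty := by
    obtain ⟨l, hl, hMl⟩ := aux_exists_ge hβ0 hC0 hscal hθ0pos hφθ0
      (show (0 : ℝ) < 1 / t by positivity)
    exact ⟨l, hl, hMl⟩
  have hSbdd : BddBelow S := ⟨0, fun l hl => hl.1.le⟩
  set a : ℝ := genInv φ (1 / t) with haa
  have hainf : a = sInf S := rfl
  have hapos : 0 < a := by
    have hcont : ContinuousWithinAt φ (Set.Ici 0) 0 := hφ.1 0 Set.self_mem_Ici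
    have hmem : {l : ℝ | φ l < 1 / t} ∈ nhdsWithin (0 : ℝ) (Set.Ici 0) := by
      apply hcont (Iio_mem_nhds ?_)
      rw [hφ0]; positivity
    rw [Metric.mem_nhdsWithin_iff] at hmem
    obtain ⟨ε, hε, hball⟩ := hmem
    have hεle : ∀ l ∈ S, ε ≤ l := by
      intro l hl
      by_contra hlt
      push_neg at hlt
      have hmemb : l ∈ Metric.ball (0 : ℝ) ε ∩ Set.Ici 0 := by
        constructor
        · rw [Metric.mem_ball, Real.dist_eq, sub_zero, abs_of_pos hl.1]; exact hlt
        · exact hl.1.le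
      exact absurd (hball hmemb) (not_lt.mpr hl.2)
    rw [hainf]
    exact lt_of_lt_of_le hε (le_csInf hSne hεle)
  -- key scaling estimate
  have hkey : ∀ l : ℝ, 2 * a ≤ l → (l / (2 * a)) ^ β / C ≤ t * φ l := by
    intro l hl
    have h2a : (0 : ℝ) < 2 * a := by positivity
    have hlpos : 0 < l := lt_of_lt_of_le h2a hl
    obtain ⟨m, hmS, hmlt⟩ : ∃ m ∈ S, m < 2 * a := by
      apply (csInf_lt_iff hSbdd hSne).mp
      rw [← hainf]; linarith
    obtain ⟨hm0, hmφ⟩ := hmS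
    have hml : m ≤ l := le_of_lt (lt_of_lt_of_le hmlt hl)
    have hsc := hscal (m / l) (by positivity) (div_le_one_of_le₀ hml hlpos.le) l hlpos
    rw [div_mul_cancel₀ _ hlpos.ne'] at hsc
    have hφl0 : 0 ≤ φ l := hφ.2.2.1 l hlpos.le
    have hmono : (m / l) ^ β ≤ (2 * a / l) ^ β := by
      apply Real.rpow_le_rpow (by positivity) _ hβ0.le
      gcongr
    have h1t : 1 / t ≤ C * (2 * a / l) ^ β * φ l := by
      calc 1 / t ≤ φ m := hmφ
        _ ≤ C * (m / l) ^ β * φ l := hsc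
        _ ≤ C * (2 * a / l) ^ β * φ l :=
            mul_le_mul_of_nonneg_right (mul_le_mul_of_nonneg_left hmono hC0.le) hφl0
    set y : ℝ := (2 * a / l) ^ β with hy
    have hypos : 0 < y := Real.rpow_pos_of_pos (by positivity) _
    have hinv : (l / (2 * a)) ^ β = y⁻¹ := by
      rw [hy, ← Real.inv_rpow (by positivity : (0 : ℝ) ≤ 2 * a / l), inv_div]
    have h2 : 1 ≤ C * y * φ l * t := by
      have := (div_le_iff₀ ht).mp h1t
      linarith
    have h3 : y⁻¹ ≤ t * φ l * C := by
      calc y⁻¹ = y⁻¹ * 1 := (mul_one _).symm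
        _ ≤ y⁻¹ * (C * y * φ l * t) := mul_le_mul_of_nonneg_left h2 (inv_pos.mpr hypos).le
        _ = (y⁻¹ * y) * (C * φ l * t) := by ring
        _ = t * φ l * C := by rw [inv_mul_cancel₀ hypos.ne', one_mul]; ring
    rw [hinv, div_le_iff₀ hC0]
    exact h3
  -- layer cake representation
  set ν : Measure ℝ := (μ t).restrict (Set.Ioi 0) with hν
  have hmeas : Measurable fun s : ℝ => s ^ c := measurable_id.pow_const _
  have hlayer : ∫⁻ s, ENNReal.ofReal (s ^ c) ∂ν = ∫⁻ r in Set.Ioi 0, ν {s : ℝ | r < s ^ c} := by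
    apply lintegral_eq_lintegral_meas_lt ν ?_ hmeas.aemeasurable
    filter_upwards [ae_restrict_mem measurableSet_Ioi] with s hs
    exact Real.rpow_nonneg (le_of_lt hs) _
  set r0 : ℝ := (2 * a) ^ ((d : ℝ) / 2) with hr0def
  have hr0 : 0 < r0 := Real.rpow_pos_of_pos (by positivity) _
  have h2a' : (d : ℝ) / 2 * ((2 : ℝ) / (d : ℝ)) = 1 := by field_simp
  have h2a : r0 ^ ((2 : ℝ) / (d : ℝ)) = 2 * a := by
    rw [hr0def, ← Real.rpow_mul (by positivity : (0 : ℝ) ≤ 2 * a), h2a', Real.rpow_one]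
  have hsplit : Set.Ioi (0 : ℝ) = Set.Ioc 0 r0 ∪ Set.Ioi r0 :=
    (Set.Ioc_union_Ioi_eq_Ioi hr0.le).symm
  -- piece 1
  have hp1 : ∫⁻ r in Set.Ioc 0 r0, ν {s : ℝ | r < s ^ c} ≤ ENNReal.ofReal r0 := by
    calc ∫⁻ r in Set.Ioc 0 r0, ν {s : ℝ | r < s ^ c}
        ≤ ∫⁻ _ in Set.Ioc 0 r0, 1 := by
          refine lintegral_mono fun r => ?_
          rw [hν, Measure.restrict_apply' measurableSet_Ioi]
          exact prob_le_one
      _ = volume (Set.Ioc (0 : ℝ) r0) := setLIntegral_one _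
      _ = ENNReal.ofReal r0 := by rw [Real.volume_Ioc, sub_zero]
  -- pointwise bound on the tail
  have hpt : ∀ r ∈ Set.Ioi r0, ν {s : ℝ | r < s ^ c} ≤
      ENNReal.ofReal (K * (r0 ^ (2 : ℝ) * r ^ (-2 : ℝ))) := by
    intro r hr
    have hrr0 : r0 < r := hr
    have hrpos : 0 < r := hr0.trans hrr0
    set x : ℝ := r ^ (-(2 : ℝ) / (d : ℝ)) with hx
    have hxpos : 0 < x := Real.rpow_pos_of_pos hrpos _
    have hxc : x ^ c = r := by
      rw [hx, ← Real.rpow_mul hrpos.le]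
      have hce : -(2 : ℝ) / (d : ℝ) * c = 1 := by rw [hc]; field_simp
      rw [hce, Real.rpow_one]
    have hsub : {s : ℝ | r < s ^ c} ∩ Set.Ioi 0 ⊆ Set.Ioc 0 x := by
      rintro s ⟨hs1, hs2⟩
      refine ⟨hs2, ?_⟩
      by_contra hxs
      push_neg at hxs
      have hcle : c ≤ 0 := by
        rw [hc, neg_div]
        exact neg_nonpos.mpr (by positivity)
      have : s ^ c ≤ x ^ c := Real.rpow_le_rpow_of_nonpos hxpos hxs.le hcle
      rw [hxc] at this
      exact absurd hs1 (not_lt.mpr this)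
    have hmeasle : ν {s : ℝ | r < s ^ c} ≤ μ t (Set.Ioc 0 x) := by
      rw [hν, Measure.restrict_apply' measurableSet_Ioi]
      exact measure_mono hsub
    have hsb := smallBall_aux (φ := φ) (μ t) hlap hxpos
    have hxinv : x⁻¹ = r ^ ((2 : ℝ) / (d : ℝ)) := by
      rw [hx, show -(2 : ℝ) / (d : ℝ) = -((2 : ℝ) / (d : ℝ)) by ring,
        Real.rpow_neg hrpos.le, inv_inv]
    set lam : ℝ := r ^ ((2 : ℝ) / (d : ℝ)) with hlam
    have hlamge : 2 * a ≤ lam := by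
      have hmono2 := Real.rpow_le_rpow hr0.le hrr0.le
        (show (0 : ℝ) ≤ (2 : ℝ) / (d : ℝ) by positivity)
      rw [h2a] at hmono2
      exact hmono2
    have hkeyl := hkey lam hlamge
    set u : ℝ := r / r0 with hu
    have hu0 : 0 < u := by positivity
    have hu1 : 1 < u := (one_lt_div hr0).mpr hrr0
    have hlam2a : lam / (2 * a) = u ^ ((2 : ℝ) / (d : ℝ)) := by
      rw [hu, Real.div_rpow hrpos.le hr0.le, h2a, ← hlam]
    set e : ℝ := (2 : ℝ) / (d : ℝ) * β with he
    have hub : (lam / (2 * a)) ^ β = u ^ e := by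
      rw [hlam2a, he, Real.rpow_mul hu0.le]
    have hue : 0 < u ^ e := Real.rpow_pos_of_pos hu0 _
    -- exp bound
    have hfac : (u ^ e / C) ^ n / (n.factorial : ℝ) ≤ Real.exp (u ^ e / C) :=
      Real.pow_div_factorial_le_exp (x := u ^ e / C) (by positivity) n
    have hpos2 : 0 < (u ^ e / C) ^ n / (n.factorial : ℝ) := by positivity
    have hinv2 : Real.exp (-(u ^ e / C)) ≤ ((u ^ e / C) ^ n / (n.factorial : ℝ))⁻¹ := by
      rw [Real.exp_neg]
      exact inv_anti₀ hpos2 hfac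
    have heq2 : ((u ^ e / C) ^ n / (n.factorial : ℝ))⁻¹ =
        (n.factorial : ℝ) * C ^ n * ((u ^ e) ^ n)⁻¹ := by
      rw [div_pow, div_div, inv_div, div_eq_mul_inv]
      ring
    have hen : (2 : ℝ) ≤ e * n := by
      have hceil : (d : ℝ) / β ≤ (n : ℝ) := by rw [hn]; exact_mod_cast Nat.le_ceil _
      have hdn : (d : ℝ) ≤ (n : ℝ) * β := by
        rw [div_le_iff₀ hβ0] at hceil; exact hceil
      have hre : e * n = 2 * ((n : ℝ) * β) / d := by rw [he]; ring
      rw [hre, le_div_iff₀ hd0]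
      linarith
    have hupow : ((u ^ e) ^ n)⁻¹ ≤ u ^ (-2 : ℝ) := by
      have h1 : ((u ^ e) ^ n : ℝ) = u ^ (e * n) := by
        rw [← Real.rpow_natCast (u ^ e) n, ← Real.rpow_mul hu0.le]
      rw [h1, ← Real.rpow_neg hu0.le]
      exact Real.rpow_le_rpow_of_exponent_le hu1.le (by linarith)
    have hexp2 : Real.exp (-(u ^ e / C)) ≤ (n.factorial : ℝ) * C ^ n * u ^ (-2 : ℝ) := by
      calc Real.exp (-(u ^ e / C)) ≤ (n.factorial : ℝ) * C ^ n * ((u ^ e) ^ n)⁻¹ :=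
            hinv2.trans_eq heq2
        _ ≤ (n.factorial : ℝ) * C ^ n * u ^ (-2 : ℝ) :=
            mul_le_mul_of_nonneg_left hupow (by positivity)
    have hexp1 : Real.exp (-(t * φ x⁻¹)) ≤ Real.exp (-(u ^ e / C)) := by
      apply Real.exp_le_exp.mpr
      rw [neg_le_neg_iff]
      have h5 : u ^ e / C ≤ t * φ lam := by rw [← hub]; exact hkeyl
      rw [hxinv]
      exact h5
    have huu : u ^ (-2 : ℝ) = r0 ^ (2 : ℝ) * r ^ (-2 : ℝ) := by
      rw [hu, Real.div_rpow hrpos.le hr0.le, Real.rpow_neg hr0.le, div_eq_mul_inv, inv_inv]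
      ring
    have hfinal : Real.exp 1 * Real.exp (-(t * φ x⁻¹)) ≤ K * (r0 ^ (2 : ℝ) * r ^ (-2 : ℝ)) := by
      calc Real.exp 1 * Real.exp (-(t * φ x⁻¹))
          ≤ Real.exp 1 * ((n.factorial : ℝ) * C ^ n * u ^ (-2 : ℝ)) :=
            mul_le_mul_of_nonneg_left (hexp1.trans hexp2) (Real.exp_pos _).le
        _ = K * (u ^ (-2 : ℝ)) := by rw [hK]; ring
        _ = K * (r0 ^ (2 : ℝ) * r ^ (-2 : ℝ)) := by rw [huu]
    calc ν {s : ℝ | r < s ^ c} ≤ μ t (Set.Ioc 0 x) := hmeasle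
      _ ≤ ENNReal.ofReal (Real.exp 1 * Real.exp (-(t * φ x⁻¹))) := hsb
      _ ≤ ENNReal.ofReal (K * (r0 ^ (2 : ℝ) * r ^ (-2 : ℝ))) := ENNReal.ofReal_le_ofReal hfinal
  -- piece 2
  have hp2 : ∫⁻ r in Set.Ioi r0, ν {s : ℝ | r < s ^ c} ≤ ENNReal.ofReal (K * r0) := by
    have hgm : Measurable fun r : ℝ => ENNReal.ofReal (K * (r0 ^ (2 : ℝ) * r ^ (-2 : ℝ))) := by
      apply Measurable.ennreal_ofReal
      exact (measurable_const.mul ((measurable_id.pow_const _).const_mul _))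
    have hb : ∫⁻ r in Set.Ioi r0, ν {s : ℝ | r < s ^ c}
        ≤ ∫⁻ r in Set.Ioi r0, ENNReal.ofReal (K * (r0 ^ (2 : ℝ) * r ^ (-2 : ℝ))) :=
      setLIntegral_mono hgm hpt
    have hbase : IntegrableOn (fun r : ℝ => r ^ (-2 : ℝ)) (Set.Ioi r0) :=
      integrableOn_Ioi_rpow_of_lt (by norm_num) hr0
    have hintg : IntegrableOn (fun r : ℝ => K * (r0 ^ (2 : ℝ) * r ^ (-2 : ℝ))) (Set.Ioi r0) := by
      have := hbase.const_mul (K * r0 ^ (2 : ℝ))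
      simpa [mul_assoc, IntegrableOn] using this
    have hnn : 0 ≤ᵐ[volume.restrict (Set.Ioi r0)]
        fun r : ℝ => K * (r0 ^ (2 : ℝ) * r ^ (-2 : ℝ)) := by
      filter_upwards [ae_restrict_mem measurableSet_Ioi] with r hr
      have hrpos : (0 : ℝ) < r := hr0.trans hr
      positivity
    have hc2 : ∫⁻ r in Set.Ioi r0, ENNReal.ofReal (K * (r0 ^ (2 : ℝ) * r ^ (-2 : ℝ)))
        = ENNReal.ofReal (K * r0) := by
      rw [← ofReal_integral_eq_lintegral_ofReal hintg hnn]
      congr 1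
      have hfun : (fun r : ℝ => K * (r0 ^ (2 : ℝ) * r ^ (-2 : ℝ)))
          = fun r : ℝ => (K * r0 ^ (2 : ℝ)) * r ^ (-2 : ℝ) := by
        funext r; ring
      rw [hfun, integral_const_mul, integral_Ioi_rpow_of_lt (by norm_num) hr0]
      have harith : -r0 ^ ((-2 : ℝ) + 1) / ((-2 : ℝ) + 1) = r0 ^ (-1 : ℝ) := by
        norm_num
      rw [harith, mul_assoc, ← Real.rpow_add hr0]
      norm_num
    exact hb.trans hc2.le
  -- assemble
  calc ∫⁻ s in Set.Ioi (0 : ℝ), ENNReal.ofReal (s ^ c) ∂μ t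
      = ∫⁻ r in Set.Ioi 0, ν {s : ℝ | r < s ^ c} := hlayer
    _ = (∫⁻ r in Set.Ioc 0 r0, ν {s : ℝ | r < s ^ c})
        + ∫⁻ r in Set.Ioi r0, ν {s : ℝ | r < s ^ c} := by
        rw [hsplit, lintegral_union measurableSet_Ioi (Set.Ioc_disjoint_Ioi le_rfl)]
    _ ≤ ENNReal.ofReal r0 + ENNReal.ofReal (K * r0) := add_le_add hp1 hp2
    _ = ENNReal.ofReal (r0 + K * r0) := (ENNReal.ofReal_add hr0.le (by positivity)).symm
    _ = ENNReal.ofReal ((2 : ℝ) ^ ((d : ℝ) / 2) * (1 + K) * a ^ ((d : ℝ) / 2)) := by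
        congr 1
        rw [hr0def, Real.mul_rpow (by norm_num) hapos.le]
        ring
end
end

section
/- Let φ be a Bernstein function with φ(0) = 0 satisfying φ(λθ) ≤ C_2·λ^β·φ(θ) for all λ ∈ (0,1] and all θ > 0, for some β ∈ (0,1] and C_2 ≥ 1, and for t > 0 let μ_t be the Borel probability measure on [0,∞) with Laplace transform e^{−t·φ(λ)}. Let W: (0,∞) → (0,∞) be non-decreasing with W(R)/W(r) ≤ C_1·(R/r)^δ for all R ≥ r > 0, for some C_1 ≥ 1 and δ > 0. Let p: (0,∞) → [0,∞) be measurable with p(s) ≤ 1/W(s) for all s > 0. Then there is a constant C > 0, depending only on C_1, C_2, δ and β, such that ∫_{(0,∞)} p(s) μ_t(ds) ≤ C / W(1/φ^{−1}(1/t)) for all t > 0, where φ^{−1}(u) = inf{λ > 0 : φ(λ) ≥ u}. -/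
open MeasureTheory Real Set

noncomputable section

/-- A Bernstein function is monotone on `[0,∞)`. -/
lemma bernstein_monotoneOn {φ : ℝ → ℝ} (hφ : IsBernstein φ) : MonotoneOn φ (Set.Ici 0) := by
  obtain ⟨hc, hd, _, hder⟩ := hφ
  refine monotoneOn_of_deriv_nonneg (convex_Ici 0) hc ?_ ?_
  · rw [interior_Ici]
    exact hd.differentiableOn (by simp)
  · rw [interior_Ici]
    intro x hx
    simpa [iteratedDeriv_one] using hder 1 le_rfl x hx

/-- Almost every point is nonnegative for a measure vanishing on `(-∞,0)`. -/
lemma aux_ae_nonneg {μ : Measure ℝ} (h0 : μ (Set.Iio 0) = 0) : ∀ᵐ s ∂μ, 0 ≤ s := by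
  rw [ae_iff]
  have h : {a : ℝ | ¬ (0:ℝ) ≤ a} = Set.Iio 0 := by ext a; simp [not_le]
  rw [h]; exact h0

lemma aux_integrable {μ : Measure ℝ} [IsFiniteMeasure μ] (h0 : μ (Set.Iio 0) = 0)
    {l : ℝ} (hl : 0 ≤ l) : Integrable (fun s => Real.exp (-l * s)) μ := by
  refine Integrable.mono' (integrable_const 1) ?_ ?_
  · exact (Real.continuous_exp.comp (continuous_const.mul continuous_id)).aestronglyMeasurable
  · filter_upwards [aux_ae_nonneg h0] with s hs
    rw [Real.norm_eq_abs, abs_of_pos (Real.exp_pos _), Real.exp_le_one_iff]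
    nlinarith [mul_nonneg hl hs]

/-- Chernoff-type tail bound for the subordinator law. -/
lemma tail_bound {μ : Measure ℝ} [IsFiniteMeasure μ] (h0 : μ (Set.Iio 0) = 0)
    {t : ℝ} {φ : ℝ → ℝ} (l x : ℝ) (hl : 0 ≤ l)
    (hL : (∫ s, Real.exp (-l * s) ∂μ) = Real.exp (-t * φ l)) :
    μ (Set.Ioc 0 x) ≤ ENNReal.ofReal (Real.exp (l * x) * Real.exp (-t * φ l)) := by
  have hint : Integrable (fun s => Real.exp (-l * s)) μ := aux_integrable h0 hl
  have h1 : Real.exp (-(l * x)) * (μ (Set.Ioc 0 x)).toReal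
      ≤ ∫ s in Set.Ioc 0 x, Real.exp (-l * s) ∂μ := by
    apply setIntegral_ge_of_const_le_real measurableSet_Ioc (measure_ne_top μ _) ?_ hint.integrableOn
    intro s hs
    apply Real.exp_le_exp.2
    nlinarith [mul_le_mul_of_nonneg_left hs.2 hl]
  have h2 : (∫ s in Set.Ioc 0 x, Real.exp (-l * s) ∂μ) ≤ Real.exp (-t * φ l) := by
    rw [← hL]
    exact setIntegral_le_integral hint (Filter.Eventually.of_forall fun s => (Real.exp_pos _).le)
  have h3 : (μ (Set.Ioc 0 x)).toReal ≤ Real.exp (l * x) * Real.exp (-t * φ l) := by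
    have h4 := h1.trans h2
    rw [Real.exp_neg] at h4
    have h5 := mul_le_mul_of_nonneg_left h4 (Real.exp_pos (l * x)).le
    rwa [← mul_assoc, mul_inv_cancel₀ (Real.exp_pos (l * x)).ne', one_mul] at h5
  exact (ENNReal.le_ofReal_iff_toReal_le (measure_ne_top μ _) (by positivity)).2 h3

/-- Dyadic localization in `(0, r]`. -/
lemma exists_dyadic {r s : ℝ} (hs : 0 < s) (hsr : s ≤ r) :
    ∃ n : ℕ, r / 2 ^ (n + 1) < s ∧ s ≤ r / 2 ^ n := by
  classical
  have hr : 0 < r := hs.trans_le hsr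
  have hex : ∃ m : ℕ, r / 2 ^ (m + 1) < s := by
    obtain ⟨m, hm⟩ := pow_unbounded_of_one_lt (r / s) (one_lt_two (α := ℝ))
    refine ⟨m, ?_⟩
    rw [div_lt_iff₀ hs] at hm
    rw [div_lt_iff₀ (by positivity : (0:ℝ) < 2 ^ (m + 1))]
    have h2 : (2:ℝ) ^ m ≤ 2 ^ (m + 1) := pow_le_pow_right₀ one_le_two (Nat.le_succ m)
    nlinarith
  refine ⟨Nat.find hex, Nat.find_spec hex, ?_⟩
  rcases Nat.eq_zero_or_pos (Nat.find hex) with h | h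
  · rw [h]; simpa using hsr
  · have hm := Nat.find_min hex (by omega : Nat.find hex - 1 < Nat.find hex)
    push_neg at hm
    have he : Nat.find hex - 1 + 1 = Nat.find hex := by omega
    rwa [he] at hm

/-- Key elementary estimate for the dyadic series. -/
lemma key_term_bound {β δ C₂ : ℝ} (hβ0 : 0 < β) (hδ : 0 < δ) (hC₂ : 1 ≤ C₂) (k : ℕ)
    (hk : 1 + δ ≤ β * k) (n : ℕ) :
    ((2:ℝ) ^ (n + 1)) ^ δ * Real.exp (-((2:ℝ) ^ n) ^ β / C₂) ≤
      (2:ℝ) ^ δ * ((k.factorial : ℝ) * C₂ ^ k) * (1 / 2) ^ n := by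
  have hC₂0 : (0:ℝ) < C₂ := one_pos.trans_le hC₂
  set x : ℝ := (2:ℝ) ^ n with hx
  have hx0 : (0:ℝ) < x := by positivity
  have hx1 : (1:ℝ) ≤ x := one_le_pow₀ one_le_two
  have hsplit : ((2:ℝ) ^ (n + 1)) ^ δ = (2:ℝ) ^ δ * x ^ δ := by
    rw [pow_succ, Real.mul_rpow hx0.le (by norm_num : (0:ℝ) ≤ 2), mul_comm]
  set y : ℝ := x ^ β / C₂ with hy
  have hy0 : 0 < y := by positivity
  have hexp : Real.exp (-y) ≤ (k.factorial : ℝ) / y ^ k := by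
    rw [Real.exp_neg]
    have h1 : y ^ k / (k.factorial : ℝ) ≤ Real.exp y := Real.pow_div_factorial_le_exp (hx := hy0.le) (n := k)
    have h2 : (0:ℝ) < y ^ k / (k.factorial : ℝ) := by positivity
    have h3 := one_div_le_one_div_of_le h2 h1
    rwa [one_div_div, one_div (Real.exp y)] at h3
  have hyk : y ^ k = x ^ (β * k) / C₂ ^ k := by
    rw [hy, div_pow, ← Real.rpow_natCast (x ^ β) k, ← Real.rpow_mul hx0.le]
  have hne : -((2:ℝ) ^ n) ^ β / C₂ = -y := by rw [hy]; ring
  calc ((2:ℝ) ^ (n + 1)) ^ δ * Real.exp (-((2:ℝ) ^ n) ^ β / C₂)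
      = (2:ℝ) ^ δ * x ^ δ * Real.exp (-y) := by rw [hsplit, hne]
    _ ≤ (2:ℝ) ^ δ * x ^ δ * ((k.factorial : ℝ) / y ^ k) := by
        apply mul_le_mul_of_nonneg_left hexp (by positivity)
    _ = (2:ℝ) ^ δ * ((k.factorial : ℝ) * C₂ ^ k) * (x ^ δ / x ^ (β * k)) := by
        rw [hyk]
        have hxk : x ^ (β * (k:ℝ)) ≠ 0 := (Real.rpow_pos_of_pos hx0 _).ne'
        field_simp
    _ = (2:ℝ) ^ δ * ((k.factorial : ℝ) * C₂ ^ k) * x ^ (δ - β * k) := by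
        rw [Real.rpow_sub hx0]
    _ ≤ (2:ℝ) ^ δ * ((k.factorial : ℝ) * C₂ ^ k) * x ^ (-1 : ℝ) := by
        apply mul_le_mul_of_nonneg_left
          (Real.rpow_le_rpow_of_exponent_le hx1 (by linarith)) (by positivity)
    _ = (2:ℝ) ^ δ * ((k.factorial : ℝ) * C₂ ^ k) * (1 / 2) ^ n := by
        rw [Real.rpow_neg_one, hx, ← inv_pow, one_div]

theorem subordinated_ondiagonal_upper_bound
    (φ : ℝ → ℝ) (hφ : IsBernstein φ) (hφ0 : φ 0 = 0)
    (β C₂ : ℝ) (hβ0 : 0 < β) (hβ1 : β ≤ 1) (hC₂ : 1 ≤ C₂)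
    (hscal : ∀ l : ℝ, 0 < l → l ≤ 1 → ∀ θ : ℝ, 0 < θ → φ (l * θ) ≤ C₂ * l ^ β * φ θ)
    (μ : ℝ → Measure ℝ) (hμ : IsSubordinatorLaw φ μ)
    (W : ℝ → ℝ) (hWpos : ∀ r : ℝ, 0 < r → 0 < W r)
    (hWmono : MonotoneOn W (Set.Ioi 0))
    (C₁ δ : ℝ) (hC₁ : 1 ≤ C₁) (hδ : 0 < δ)
    (hWscal : ∀ r R : ℝ, 0 < r → r ≤ R → W R / W r ≤ C₁ * (R / r) ^ δ)
    (p : ℝ → ℝ) (hpmeas : Measurable p) (hp0 : ∀ s : ℝ, 0 < s → 0 ≤ p s)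
    (hple : ∀ s : ℝ, 0 < s → p s ≤ 1 / W s) :
    ∃ C : ℝ, 0 < C ∧ ∀ t : ℝ, 0 < t →
      (∫⁻ s in Set.Ioi (0 : ℝ), ENNReal.ofReal (p s) ∂μ t) ≤
        ENNReal.ofReal (C / W (1 / genInv φ (1 / t))) := by
  classical
  obtain ⟨hc, hd, hnn, hder⟩ := id hφ
  have hmono : MonotoneOn φ (Set.Ici 0) := bernstein_monotoneOn hφ
  have hC₂0 : (0:ℝ) < C₂ := one_pos.trans_le hC₂
  have hC₁0 : (0:ℝ) < C₁ := one_pos.trans_le hC₁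
  set k : ℕ := Nat.ceil ((1 + δ) / β) with hkdef
  have hkβ : 1 + δ ≤ β * k := by
    have h := Nat.le_ceil ((1 + δ) / β)
    rw [div_le_iff₀ hβ0] at h
    calc (1:ℝ) + δ ≤ (k : ℝ) * β := h
      _ = β * k := by ring
  set K : ℝ := (k.factorial : ℝ) * C₂ ^ k with hKdef
  have hK0 : 0 < K := by positivity
  refine ⟨1 + 2 * C₁ * Real.exp 1 * ((2:ℝ) ^ δ * K), by positivity, ?_⟩
  intro t ht
  obtain ⟨hprob, hzero, hlap⟩ := hμ t ht
  haveI := hprob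
  by_cases hdeg : ∀ u : ℝ, 0 < u → φ u = 0
  · -- degenerate case: φ vanishes, μ t = δ₀, left side is zero
    have hφ1 : φ 1 = 0 := hdeg 1 one_pos
    have hint : Integrable (fun s => Real.exp (-1 * s)) (μ t) := aux_integrable hzero zero_le_one
    have h1 : (∫ s, Real.exp (-1 * s) ∂μ t) = 1 := by
      rw [hlap 1 zero_le_one, hφ1]; simp
    have hf : Integrable (fun s => 1 - Real.exp (-1 * s)) (μ t) := (integrable_const 1).sub hint
    have hnonneg : 0 ≤ᵐ[μ t] fun s => 1 - Real.exp (-1 * s) := by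
      filter_upwards [aux_ae_nonneg hzero] with s hs
      have h2 : Real.exp (-1 * s) ≤ 1 := Real.exp_le_one_iff.2 (by linarith)
      simp only [Pi.zero_apply]
      linarith
    have hzero' : (∫ s, (1 - Real.exp (-1 * s)) ∂μ t) = 0 := by
      rw [integral_sub (integrable_const 1) hint, h1, integral_const]
      simp
    have hae := (integral_eq_zero_iff_of_nonneg_ae hnonneg hf).1 hzero'
    have hI : μ t (Set.Ioi 0) = 0 := by
      have hsub : Set.Ioi (0:ℝ) ⊆ {s : ℝ | ¬ (1 - Real.exp (-1 * s) = 0)} := by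
        intro s hs
        simp only [Set.mem_setOf_eq]
        have h3 : Real.exp (-1 * s) < 1 := Real.exp_lt_one_iff.2 (by simp at hs; linarith)
        intro h4; linarith
      refine measure_mono_null hsub ?_
      have h5 := ae_iff.1 hae
      simpa using h5
    rw [show (μ t).restrict (Set.Ioi (0:ℝ)) = 0 from Measure.restrict_eq_zero.2 hI,
      lintegral_zero_measure]
    exact zero_le
  · push_neg at hdeg
    obtain ⟨u₀, hu₀pos, hu₀⟩ := hdeg
    have hφu₀ : 0 < φ u₀ := lt_of_le_of_ne (hnn u₀ hu₀pos.le) (Ne.symm hu₀)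
    have h1t : (0:ℝ) < 1 / t := by positivity
    -- the set defining the generalized inverse is nonempty
    have hSne : {l : ℝ | 0 < l ∧ 1 / t ≤ φ l}.Nonempty := by
      set x₀ : ℝ := max 1 ((1 / (t * (φ u₀ / C₂))) ^ β⁻¹) with hx₀def
      have hx₀1 : (1:ℝ) ≤ x₀ := le_max_left _ _
      have hx₀pos : (0:ℝ) < x₀ := by linarith
      refine ⟨u₀ * x₀, by positivity, ?_⟩
      have hsc := hscal x₀⁻¹ (by positivity) (inv_le_one_of_one_le₀ hx₀1) (u₀ * x₀) (by positivity)
      rw [show x₀⁻¹ * (u₀ * x₀) = u₀ by field_simp, Real.inv_rpow hx₀pos.le] at hsc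
      have hx₀β : (0:ℝ) < x₀ ^ β := Real.rpow_pos_of_pos hx₀pos β
      have hxβ1 : 1 / (t * (φ u₀ / C₂)) ≤ x₀ ^ β := by
        have h1 : (1 / (t * (φ u₀ / C₂))) ^ β⁻¹ ≤ x₀ := le_max_right _ _
        have h2 := Real.rpow_le_rpow (by positivity) h1 hβ0.le
        rwa [Real.rpow_inv_rpow (by positivity) hβ0.ne'] at h2
      -- from hsc : φ u₀ ≤ C₂ * (x₀ ^ β)⁻¹ * φ (u₀ * x₀)
      have h5 : φ u₀ * x₀ ^ β ≤ C₂ * φ (u₀ * x₀) := by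
        have h6 := mul_le_mul_of_nonneg_right hsc hx₀β.le
        calc φ u₀ * x₀ ^ β ≤ C₂ * (x₀ ^ β)⁻¹ * φ (u₀ * x₀) * x₀ ^ β := h6
          _ = C₂ * φ (u₀ * x₀) := by field_simp
      -- and hxβ1 : 1/(t φu₀/C₂) ≤ x₀^β gives 1/t ≤ φu₀ x₀^β / C₂
      have h7 : 1 / t ≤ φ u₀ * x₀ ^ β / C₂ := by
        rw [le_div_iff₀ hC₂0]
        rw [div_le_iff₀ (by positivity : (0:ℝ) < t * (φ u₀ / C₂))] at hxβ1
        have h9 : (0:ℝ) ≤ C₂ / t := by positivity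
        have h10 := mul_le_mul_of_nonneg_left hxβ1 h9
        have h11 : C₂ / t * (x₀ ^ β * (t * (φ u₀ / C₂))) = φ u₀ * x₀ ^ β := by
          field_simp
        rw [h11, mul_one] at h10
        calc 1 / t * C₂ = C₂ / t := by ring
          _ ≤ φ u₀ * x₀ ^ β := h10
      calc 1 / t ≤ φ u₀ * x₀ ^ β / C₂ := h7
        _ ≤ φ (u₀ * x₀) := by rw [div_le_iff₀ hC₂0]; linarith [h5]
    have hSbdd : BddBelow {l : ℝ | 0 < l ∧ 1 / t ≤ φ l} := ⟨0, fun l hl => hl.1.le⟩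
    set a : ℝ := genInv φ (1 / t) with hadef
    have haS : a = sInf {l : ℝ | 0 < l ∧ 1 / t ≤ φ l} := rfl
    -- positivity of a by continuity of φ at 0
    have hcont0 : ContinuousWithinAt φ (Set.Ici 0) 0 := hc 0 Set.self_mem_Ici
    rw [Metric.continuousWithinAt_iff] at hcont0
    obtain ⟨ε, hε, hεlt⟩ := hcont0 (1 / t) h1t
    have hεS : ∀ l ∈ {l : ℝ | 0 < l ∧ 1 / t ≤ φ l}, ε ≤ l := by
      intro l hl
      by_contra hcon
      push_neg at hcon
      have hld : dist l 0 < ε := by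
        rw [Real.dist_eq, sub_zero, abs_of_pos hl.1]; exact hcon
      have h8 := hεlt (Set.mem_Ici.2 hl.1.le) hld
      rw [hφ0, Real.dist_eq, sub_zero] at h8
      exact absurd (lt_of_le_of_lt hl.2 (lt_of_le_of_lt (le_abs_self _) h8)) (lt_irrefl _)
    have ha0 : 0 < a := lt_of_lt_of_le hε (haS ▸ le_csInf hSne hεS)
    -- φ a ≥ 1/t by right continuity
    have hφa : 1 / t ≤ φ a := by
      have hstep : ∀ ε' : ℝ, 0 < ε' → 1 / t ≤ φ (a + ε') := by
        intro ε' hε'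
        have hlt : sInf {l : ℝ | 0 < l ∧ 1 / t ≤ φ l} < a + ε' := by
          rw [← haS]; linarith
        obtain ⟨l, hlS, hlalt⟩ := (csInf_lt_iff hSbdd hSne).1 hlt
        exact le_trans hlS.2 (hmono (Set.mem_Ici.2 hlS.1.le)
          (Set.mem_Ici.2 (by linarith [hlS.1] : (0:ℝ) ≤ a + ε')) hlalt.le)
      have hca : ContinuousAt φ a := hd.continuousOn.continuousAt (Ioi_mem_nhds ha0)
      have hseq : Filter.Tendsto (fun n : ℕ => φ (a + 1 / (n + 1))) Filter.atTop (nhds (φ a)) := by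
        apply hca.tendsto.comp
        have h1 : Filter.Tendsto (fun n : ℕ => a + 1 / (n + 1)) Filter.atTop (nhds (a + 0)) :=
          tendsto_const_nhds.add tendsto_one_div_add_atTop_nhds_zero_nat
        simpa using h1
      exact ge_of_tendsto' hseq fun n => hstep _ (by positivity)
    set r : ℝ := 1 / a with hrdef
    have hr0 : 0 < r := by positivity
    have hWr : 0 < W r := hWpos r hr0
    have htφa : 1 ≤ t * φ a := by
      rw [div_le_iff₀ ht] at hφa; linarith
    -- tail estimate at each dyadic scale
    have htail : ∀ n : ℕ, μ t (Set.Ioc 0 (r / 2 ^ n)) ≤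
        ENNReal.ofReal (Real.exp 1 * Real.exp (-((2:ℝ) ^ n) ^ β / C₂)) := by
      intro n
      have h2n : (0:ℝ) < 2 ^ n := by positivity
      have hl : (0:ℝ) ≤ 2 ^ n * a := by positivity
      have hT := tail_bound (μ := μ t) hzero ((2:ℝ) ^ n * a) (r / 2 ^ n) hl (hlap _ hl)
      refine le_trans hT (ENNReal.ofReal_le_ofReal ?_)
      have harg : (2:ℝ) ^ n * a * (r / 2 ^ n) = 1 := by
        rw [hrdef]; field_simp
      rw [harg]
      have hφn : ((2:ℝ) ^ n) ^ β / C₂ ≤ t * φ ((2:ℝ) ^ n * a) := by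
        have hinv1 : ((2:ℝ) ^ n)⁻¹ ≤ 1 := inv_le_one_of_one_le₀ (one_le_pow₀ one_le_two)
        have hsc := hscal ((2:ℝ) ^ n)⁻¹ (by positivity) hinv1 ((2:ℝ) ^ n * a) (by positivity)
        rw [show ((2:ℝ) ^ n)⁻¹ * ((2:ℝ) ^ n * a) = a by field_simp,
          Real.inv_rpow h2n.le] at hsc
        have hb : (0:ℝ) < ((2:ℝ) ^ n) ^ β := Real.rpow_pos_of_pos h2n β
        have h5 : ((2:ℝ) ^ n) ^ β * φ a ≤ C₂ * φ ((2:ℝ) ^ n * a) := by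
          have h6 := mul_le_mul_of_nonneg_left hsc hb.le
          calc ((2:ℝ) ^ n) ^ β * φ a
              ≤ ((2:ℝ) ^ n) ^ β * (C₂ * (((2:ℝ) ^ n) ^ β)⁻¹ * φ ((2:ℝ) ^ n * a)) := h6
            _ = C₂ * φ ((2:ℝ) ^ n * a) := by field_simp
        rw [div_le_iff₀ hC₂0]
        have e1 := mul_le_mul_of_nonneg_left h5 ht.le
        have e2 := mul_le_mul_of_nonneg_left htφa hb.le
        nlinarith
      have h9 : -t * φ ((2:ℝ) ^ n * a) ≤ -((2:ℝ) ^ n) ^ β / C₂ := by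
        have : -((2:ℝ) ^ n) ^ β / C₂ = -(((2:ℝ) ^ n) ^ β / C₂) := by ring
        rw [this]; linarith
      exact mul_le_mul_of_nonneg_left (Real.exp_le_exp.2 h9) (Real.exp_pos 1).le
    -- pointwise bound for p on (0, r]
    have hWs : ∀ s : ℝ, 0 < s → s ≤ r → p s ≤ C₁ * (r / s) ^ δ / W r := by
      intro s hs hsr
      have hWspos := hWpos s hs
      have h1 := hWscal s r hs hsr
      have h2 : p s ≤ 1 / W s := hple s hs
      have h3 : (1:ℝ) / W s = (W r / W s) / W r := by field_simp
      rw [h3] at h2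
      refine h2.trans ?_
      gcongr
    -- bound on each dyadic piece
    have hpiece : ∀ n : ℕ, (∫⁻ s in Set.Ioc (r / 2 ^ (n + 1)) (r / 2 ^ n),
        ENNReal.ofReal (p s) ∂μ t) ≤
        ENNReal.ofReal ((C₁ * ((2:ℝ) ^ (n + 1)) ^ δ / W r) *
          (Real.exp 1 * Real.exp (-((2:ℝ) ^ n) ^ β / C₂))) := by
      intro n
      have hcn0 : (0:ℝ) ≤ C₁ * ((2:ℝ) ^ (n + 1)) ^ δ / W r := by positivity
      calc ∫⁻ s in Set.Ioc (r / 2 ^ (n + 1)) (r / 2 ^ n), ENNReal.ofReal (p s) ∂μ t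
          ≤ ∫⁻ _ in Set.Ioc (r / 2 ^ (n + 1)) (r / 2 ^ n),
              ENNReal.ofReal (C₁ * ((2:ℝ) ^ (n + 1)) ^ δ / W r) ∂μ t := by
            apply setLIntegral_mono measurable_const
            intro s hs
            apply ENNReal.ofReal_le_ofReal
            have hs0 : 0 < s := lt_trans (by positivity : (0:ℝ) < r / 2 ^ (n + 1)) hs.1
            have hsr : s ≤ r := hs.2.trans (div_le_self hr0.le (one_le_pow₀ one_le_two))
            refine (hWs s hs0 hsr).trans ?_
            have h4 : r / s ≤ 2 ^ (n + 1) := by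
              rw [div_le_iff₀ hs0]
              have h4' := hs.1
              rw [div_lt_iff₀ (by positivity : (0:ℝ) < 2 ^ (n + 1))] at h4'
              linarith
            have h5 : (r / s) ^ δ ≤ ((2:ℝ) ^ (n + 1)) ^ δ :=
              Real.rpow_le_rpow (by positivity) h4 hδ.le
            gcongr
        _ = ENNReal.ofReal (C₁ * ((2:ℝ) ^ (n + 1)) ^ δ / W r) *
              μ t (Set.Ioc (r / 2 ^ (n + 1)) (r / 2 ^ n)) := setLIntegral_const _ _
        _ ≤ ENNReal.ofReal (C₁ * ((2:ℝ) ^ (n + 1)) ^ δ / W r) *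
              μ t (Set.Ioc 0 (r / 2 ^ n)) := by
            exact mul_le_mul_right (measure_mono (Set.Ioc_subset_Ioc_left (by positivity))) _
        _ ≤ ENNReal.ofReal (C₁ * ((2:ℝ) ^ (n + 1)) ^ δ / W r) *
              ENNReal.ofReal (Real.exp 1 * Real.exp (-((2:ℝ) ^ n) ^ β / C₂)) :=
            mul_le_mul_right (htail n) _
        _ = _ := (ENNReal.ofReal_mul hcn0).symm
    -- covering
    have hcover : Set.Ioc 0 r ⊆ ⋃ n : ℕ, Set.Ioc (r / 2 ^ (n + 1)) (r / 2 ^ n) := by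
      intro s hs
      obtain ⟨n, h1, h2⟩ := exists_dyadic hs.1 hs.2
      exact Set.mem_iUnion.2 ⟨n, h1, h2⟩
    -- series estimates
    set g : ℕ → ℝ := fun n => (C₁ * ((2:ℝ) ^ (n + 1)) ^ δ / W r) *
      (Real.exp 1 * Real.exp (-((2:ℝ) ^ n) ^ β / C₂)) with hgdef
    have hg_nonneg : ∀ n : ℕ, 0 ≤ g n := by intro n; rw [hgdef]; positivity
    have hg_le : ∀ n : ℕ, g n ≤ (C₁ * Real.exp 1 / W r) * ((2:ℝ) ^ δ * K) * (1 / 2) ^ n := by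
      intro n
      have hkey := key_term_bound hβ0 hδ hC₂ k hkβ n
      have h0 : (0:ℝ) ≤ C₁ * Real.exp 1 / W r := by positivity
      calc g n = (C₁ * Real.exp 1 / W r) *
            (((2:ℝ) ^ (n + 1)) ^ δ * Real.exp (-((2:ℝ) ^ n) ^ β / C₂)) := by rw [hgdef]; ring
        _ ≤ (C₁ * Real.exp 1 / W r) * ((2:ℝ) ^ δ * ((k.factorial : ℝ) * C₂ ^ k) * (1 / 2) ^ n) :=
            mul_le_mul_of_nonneg_left hkey h0
        _ = (C₁ * Real.exp 1 / W r) * ((2:ℝ) ^ δ * K) * (1 / 2) ^ n := by rw [hKdef]; ring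
    have hsummb : Summable (fun n : ℕ => (C₁ * Real.exp 1 / W r) * ((2:ℝ) ^ δ * K) * (1 / 2) ^ n) := by
      apply Summable.mul_left
      exact summable_geometric_two
    have hsumm : Summable g := Summable.of_nonneg_of_le hg_nonneg hg_le (by
      simpa [mul_assoc] using hsummb)
    have htsum : (∑' n, g n) ≤ 2 * (C₁ * Real.exp 1 / W r) * ((2:ℝ) ^ δ * K) := by
      have h1 := Summable.tsum_le_tsum hg_le hsumm (by simpa [mul_assoc] using hsummb)
      rw [tsum_mul_left, tsum_geometric_two] at h1
      linarith
    -- assembling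
    have hIoc : (∫⁻ s in Set.Ioc 0 r, ENNReal.ofReal (p s) ∂μ t) ≤
        ENNReal.ofReal (2 * (C₁ * Real.exp 1 / W r) * ((2:ℝ) ^ δ * K)) := by
      calc ∫⁻ s in Set.Ioc 0 r, ENNReal.ofReal (p s) ∂μ t
          ≤ ∫⁻ s in ⋃ n : ℕ, Set.Ioc (r / 2 ^ (n + 1)) (r / 2 ^ n),
              ENNReal.ofReal (p s) ∂μ t := lintegral_mono_set hcover
        _ ≤ ∑' n : ℕ, ∫⁻ s in Set.Ioc (r / 2 ^ (n + 1)) (r / 2 ^ n),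
              ENNReal.ofReal (p s) ∂μ t := lintegral_iUnion_le _ _
        _ ≤ ∑' n : ℕ, ENNReal.ofReal (g n) := ENNReal.tsum_le_tsum hpiece
        _ = ENNReal.ofReal (∑' n, g n) := (ENNReal.ofReal_tsum_of_nonneg hg_nonneg hsumm).symm
        _ ≤ _ := ENNReal.ofReal_le_ofReal htsum
    have hIoi : (∫⁻ s in Set.Ioi r, ENNReal.ofReal (p s) ∂μ t) ≤ ENNReal.ofReal (1 / W r) := by
      calc ∫⁻ s in Set.Ioi r, ENNReal.ofReal (p s) ∂μ t
          ≤ ∫⁻ _ in Set.Ioi r, ENNReal.ofReal (1 / W r) ∂μ t := by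
            apply setLIntegral_mono measurable_const
            intro s hs
            apply ENNReal.ofReal_le_ofReal
            have hs0 : 0 < s := hr0.trans hs
            refine (hple s hs0).trans ?_
            have h6 := hWmono (Set.mem_Ioi.2 hr0) (Set.mem_Ioi.2 hs0) (le_of_lt hs)
            exact one_div_le_one_div_of_le hWr h6
        _ = ENNReal.ofReal (1 / W r) * μ t (Set.Ioi r) := setLIntegral_const _ _
        _ ≤ ENNReal.ofReal (1 / W r) * 1 := mul_le_mul_right prob_le_one _
        _ = _ := mul_one _
    calc ∫⁻ s in Set.Ioi (0:ℝ), ENNReal.ofReal (p s) ∂μ t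
        = ∫⁻ s in Set.Ioc 0 r ∪ Set.Ioi r, ENNReal.ofReal (p s) ∂μ t := by
          rw [Set.Ioc_union_Ioi_eq_Ioi hr0.le]
      _ = (∫⁻ s in Set.Ioc 0 r, ENNReal.ofReal (p s) ∂μ t) +
            ∫⁻ s in Set.Ioi r, ENNReal.ofReal (p s) ∂μ t :=
          lintegral_union measurableSet_Ioi (Set.Ioc_disjoint_Ioi le_rfl)
      _ ≤ ENNReal.ofReal (2 * (C₁ * Real.exp 1 / W r) * ((2:ℝ) ^ δ * K)) +
            ENNReal.ofReal (1 / W r) := add_le_add hIoc hIoi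
      _ = ENNReal.ofReal (2 * (C₁ * Real.exp 1 / W r) * ((2:ℝ) ^ δ * K) + 1 / W r) :=
          (ENNReal.ofReal_add (by positivity) (by positivity)).symm
      _ = ENNReal.ofReal ((1 + 2 * C₁ * Real.exp 1 * ((2:ℝ) ^ δ * K)) / W r) := by
          congr 1
          field_simp
          ring
end
end

section
/- Let φ be a Bernstein function with φ(0) = 0 satisfying φ(λθ) ≤ C_2·λ^β·φ(θ) for all λ ∈ (0,1] and all θ > 0, for some β ∈ (0,1] and C_2 ≥ 1, and for t > 0 let μ_t be the Borel probability measure on [0,∞) with Laplace transform e^{−t·φ(λ)}. Let W: (0,∞) → (0,∞) be non-decreasing with W(R)/W(r) ≤ C_1·(R/r)^δ for all R ≥ r > 0, for some C_1 ≥ 1 and δ > 0, and let c > 0. Let p: (0,∞) → [0,∞) be measurable with p(s) ≤ min{1/W(s), s·c/W(1/c)} for all s > 0. Then there is a constant C ≥ 1, depending only on C_1, C_2, δ and β, such that ∫_{(0,∞)} p(s) μ_t(ds) ≤ C · min{1/W(1/φ^{−1}(1/t)), t·φ(c)/W(1/c)} for all t > 0, where φ^{−1}(u) = inf{λ > 0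 : φ(λ) ≥ u}. -/
open MeasureTheory Real Set

noncomputable section

lemma min_le_inv_one_sub_exp {x : ℝ} (hx : 0 ≤ x) :
    min 1 x ≤ (1 - Real.exp (-1))⁻¹ * (1 - Real.exp (-x)) := by
  have hq : 0 < 1 - Real.exp (-1) := by
    have := Real.exp_lt_one_iff.mpr (by norm_num : (-1:ℝ) < 0)
    linarith
  rcases le_total x 1 with h | h
  · rw [min_eq_right h]
    have hconv := convexOn_exp.2 (Set.mem_univ (0:ℝ)) (Set.mem_univ (-1:ℝ))
      (by linarith : (0:ℝ) ≤ 1 - x) hx (by ring)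
    simp only [smul_eq_mul, mul_zero, mul_neg, mul_one, Real.exp_zero, zero_add] at hconv
    have h1 : Real.exp (-x) ≤ 1 - x * (1 - Real.exp (-1)) := by nlinarith [hconv]
    rw [le_inv_mul_iff₀ hq]
    linarith
  · rw [min_eq_left h]
    have h2 : Real.exp (-x) ≤ Real.exp (-1) := Real.exp_le_exp.mpr (by linarith)
    rw [le_inv_mul_iff₀ hq]
    linarith

set_option maxHeartbeats 1000000 in
lemma summable_dyadic (δ β C₂ : ℝ) (hβ : 0 < β) (hC₂ : 1 ≤ C₂) :
    Summable (fun k : ℕ =>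
      (2:ℝ) ^ (((k:ℝ)+1)*δ) * (Real.exp 1 * Real.exp (-((2:ℝ) ^ ((k:ℝ)*β) / C₂)))) := by
  set n : ℕ := ⌈(δ+1)/β⌉₊ with hn
  have hC₂0 : (0:ℝ) < C₂ := lt_of_lt_of_le one_pos hC₂
  have hnβ : δ + 1 ≤ (n:ℝ) * β := by
    have h1 : (δ+1)/β ≤ (n:ℝ) := Nat.le_ceil _
    calc δ + 1 = ((δ+1)/β) * β := by field_simp
      _ ≤ (n:ℝ) * β := by nlinarith
  set M : ℝ := Real.exp 1 * ((Nat.factorial n : ℕ) : ℝ) * C₂^n * (2:ℝ)^δ with hM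
  set ρ : ℝ := (2:ℝ) ^ (δ - β * n) with hρ
  have hρ0 : 0 ≤ ρ := le_of_lt (Real.rpow_pos_of_pos two_pos _)
  have hρ1 : ρ < 1 := by
    have : ρ ≤ (2:ℝ) ^ (-1:ℝ) :=
      Real.rpow_le_rpow_of_exponent_le one_le_two (by nlinarith)
    have h2 : (2:ℝ) ^ (-1:ℝ) = 1/2 := by
      rw [Real.rpow_neg_one]; norm_num
    rw [h2] at this; linarith
  apply Summable.of_nonneg_of_le (f := fun k => M * ρ^k)
  · intro k
    positivity
  · intro k
    have hx : (0:ℝ) < (2:ℝ) ^ ((k:ℝ)*β) / C₂ := by positivity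
    have hexp : Real.exp (-((2:ℝ) ^ ((k:ℝ)*β) / C₂))
        ≤ ((Nat.factorial n : ℕ) : ℝ) / ((2:ℝ) ^ ((k:ℝ)*β) / C₂)^n := by
      rw [Real.exp_neg]
      rw [inv_le_iff_one_le_mul₀ (Real.exp_pos _)]
      have hterm : ((2:ℝ) ^ ((k:ℝ)*β) / C₂)^n / ((Nat.factorial n : ℕ) : ℝ)
          ≤ Real.exp ((2:ℝ) ^ ((k:ℝ)*β) / C₂) := by
        calc ((2:ℝ) ^ ((k:ℝ)*β) / C₂)^n / ((Nat.factorial n : ℕ) : ℝ)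
            ≤ ∑ i ∈ Finset.range (n+1), ((2:ℝ) ^ ((k:ℝ)*β) / C₂)^i / ((Nat.factorial i : ℕ) : ℝ) := by
              apply Finset.single_le_sum
                (f := fun i => ((2:ℝ) ^ ((k:ℝ)*β) / C₂)^i / ((Nat.factorial i : ℕ) : ℝ))
              · intro i _; positivity
              · simp
          _ ≤ Real.exp ((2:ℝ) ^ ((k:ℝ)*β) / C₂) := Real.sum_le_exp_of_nonneg (le_of_lt hx) _
      have hfac : (0:ℝ) < ((Nat.factorial n : ℕ) : ℝ) := by positivity
      calc (1:ℝ) = ((Nat.factorial n : ℕ) : ℝ) / ((2:ℝ) ^ ((k:ℝ)*β) / C₂)^n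
            * (((2:ℝ) ^ ((k:ℝ)*β) / C₂)^n / ((Nat.factorial n : ℕ) : ℝ)) := by
              field_simp
        _ ≤ ((Nat.factorial n : ℕ) : ℝ) / ((2:ℝ) ^ ((k:ℝ)*β) / C₂)^n
            * Real.exp ((2:ℝ) ^ ((k:ℝ)*β) / C₂) :=
              mul_le_mul_of_nonneg_left hterm (by positivity)
    have hpow : ((2:ℝ) ^ ((k:ℝ)*β) / C₂)^n = (2:ℝ)^((k:ℝ)*β*n) / C₂^n := by
      rw [div_pow, ← Real.rpow_natCast ((2:ℝ) ^ ((k:ℝ)*β)) n, ← Real.rpow_mul (by norm_num)]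
    calc (2:ℝ) ^ (((k:ℝ)+1)*δ) * (Real.exp 1 * Real.exp (-((2:ℝ) ^ ((k:ℝ)*β) / C₂)))
        ≤ (2:ℝ) ^ (((k:ℝ)+1)*δ)
            * (Real.exp 1 * (((Nat.factorial n : ℕ) : ℝ) * C₂^n / (2:ℝ)^((k:ℝ)*β*n))) := by
          apply mul_le_mul_of_nonneg_left _ (le_of_lt (Real.rpow_pos_of_pos two_pos _))
          · apply mul_le_mul_of_nonneg_left _ (Real.exp_pos 1).le
            rw [hpow] at hexp
            calc Real.exp (-((2:ℝ) ^ ((k:ℝ)*β) / C₂))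
                ≤ ((Nat.factorial n : ℕ) : ℝ) / ((2:ℝ)^((k:ℝ)*β*n) / C₂^n) := hexp
              _ = ((Nat.factorial n : ℕ) : ℝ) * C₂^n / (2:ℝ)^((k:ℝ)*β*n) := by
                  rw [div_div_eq_mul_div]
      _ = M * ρ^k := by
          rw [hM, hρ]
          rw [← Real.rpow_natCast ((2:ℝ)^(δ - β*(n:ℝ))) k, ← Real.rpow_mul (by norm_num)]
          rw [div_eq_mul_inv, ← Real.rpow_neg (by norm_num : (0:ℝ) ≤ 2)]
          have hsplit : (2:ℝ)^(((k:ℝ)+1)*δ) * (2:ℝ)^(-((k:ℝ)*β*(n:ℝ)))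
              = (2:ℝ)^δ * (2:ℝ)^((δ - β*(n:ℝ))*(k:ℝ)) := by
            rw [← Real.rpow_add two_pos, ← Real.rpow_add two_pos]
            congr 1
            ring
          linear_combination (Real.exp 1 * ((Nat.factorial n : ℕ) : ℝ) * C₂^n) * hsplit
  · exact (summable_geometric_of_lt_one hρ0 hρ1).mul_left M

set_option maxHeartbeats 2000000 in
theorem subordinated_heat_kernel_upper_bound
    (φ : ℝ → ℝ) (hφ : IsBernstein φ) (hφ0 : φ 0 = 0)
    (β C₂ : ℝ) (hβ0 : 0 < β) (hβ1 : β ≤ 1) (hC₂ : 1 ≤ C₂)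
    (hscal : ∀ l : ℝ, 0 < l → l ≤ 1 → ∀ θ : ℝ, 0 < θ → φ (l * θ) ≤ C₂ * l ^ β * φ θ)
    (μ : ℝ → Measure ℝ) (hμ : IsSubordinatorLaw φ μ)
    (W : ℝ → ℝ) (hWpos : ∀ r : ℝ, 0 < r → 0 < W r)
    (hWmono : MonotoneOn W (Set.Ioi 0))
    (C₁ δ : ℝ) (hC₁ : 1 ≤ C₁) (hδ : 0 < δ)
    (hWscal : ∀ r R : ℝ, 0 < r → r ≤ R → W R / W r ≤ C₁ * (R / r) ^ δ)
    (c : ℝ) (hc : 0 < c)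
    (p : ℝ → ℝ) (hpmeas : Measurable p) (hp0 : ∀ s : ℝ, 0 < s → 0 ≤ p s)
    (hple : ∀ s : ℝ, 0 < s → p s ≤ min (1 / W s) (s * c / W (1 / c))) :
    ∃ C : ℝ, 1 ≤ C ∧ ∀ t : ℝ, 0 < t →
      (∫⁻ s in Set.Ioi (0 : ℝ), ENNReal.ofReal (p s) ∂μ t) ≤
        ENNReal.ofReal (C * min (1 / W (1 / genInv φ (1 / t))) (t * φ c / W (1 / c))) := by
  obtain ⟨hcont, -, hφnn, -⟩ := hφ
  have hsum := summable_dyadic δ β C₂ hβ0 hC₂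
  set K : ℝ := ∑' k : ℕ,
      (2:ℝ) ^ (((k:ℝ)+1)*δ) * (Real.exp 1 * Real.exp (-((2:ℝ) ^ ((k:ℝ)*β) / C₂))) with hK
  have hK0 : 0 ≤ K := tsum_nonneg (fun k => by positivity)
  have hq : 0 < 1 - Real.exp (-1) := by
    have := Real.exp_lt_one_iff.mpr (by norm_num : (-1:ℝ) < 0)
    linarith
  set CA : ℝ := C₁ * K + 1 with hCA
  set CB : ℝ := (1 - Real.exp (-1))⁻¹ with hCB
  set C : ℝ := max 1 (max CA CB) with hC
  have hC1 : 1 ≤ C := le_max_left _ _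
  have hC0 : 0 ≤ C := le_trans zero_le_one hC1
  refine ⟨C, hC1, ?_⟩
  intro t ht
  obtain ⟨hprob, hneg, hlap⟩ := hμ t ht
  haveI := hprob
  have hW1c : 0 < W (1/c) := hWpos _ (by positivity)
  -- a.e. nonneg
  have haes : ∀ᵐ s ∂(μ t), 0 ≤ s := by
    have h := (MeasureTheory.measure_eq_zero_iff_ae_notMem).mp hneg
    filter_upwards [h] with s hs
    simpa [Set.mem_Iio, not_lt] using hs
  -- integrability of exponentials
  have hint : ∀ l : ℝ, 0 ≤ l → Integrable (fun s => Real.exp (-l * s)) (μ t) := by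
    intro l hl
    by_contra hni
    have h0 := integral_undef hni
    rw [hlap l hl] at h0
    exact (Real.exp_pos _).ne' h0
  have hlin : ∀ l : ℝ, 0 ≤ l →
      (∫⁻ s, ENNReal.ofReal (Real.exp (-l * s)) ∂(μ t)) = ENNReal.ofReal (Real.exp (-t * φ l)) := by
    intro l hl
    rw [← ofReal_integral_eq_lintegral_ofReal (hint l hl)
      (Filter.Eventually.of_forall fun s => (Real.exp_pos _).le), hlap l hl]
  -- Bound B ingredient
  have hB1 : (∫⁻ s in Set.Ioi (0:ℝ), ENNReal.ofReal (1 - Real.exp (-c * s)) ∂μ t)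
      ≤ ENNReal.ofReal (t * φ c) := by
    have hint1 : Integrable (fun s => 1 - Real.exp (-c*s)) (μ t) :=
      (integrable_const 1).sub (hint c hc.le)
    have hnn : 0 ≤ᵐ[μ t] fun s => 1 - Real.exp (-c*s) := by
      filter_upwards [haes] with s hs
      have : Real.exp (-c*s) ≤ 1 := Real.exp_le_one_iff.mpr (by nlinarith)
      simp only [Pi.zero_apply]
      linarith
    calc (∫⁻ s in Set.Ioi (0:ℝ), ENNReal.ofReal (1 - Real.exp (-c * s)) ∂μ t)
        ≤ ∫⁻ s, ENNReal.ofReal (1 - Real.exp (-c * s)) ∂μ t :=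
          setLIntegral_le_lintegral _ _
      _ = ENNReal.ofReal (∫ s, (1 - Real.exp (-c*s)) ∂μ t) :=
          (ofReal_integral_eq_lintegral_ofReal hint1 hnn).symm
      _ ≤ ENNReal.ofReal (t * φ c) := by
          apply ENNReal.ofReal_le_ofReal
          rw [integral_sub (integrable_const 1) (hint c hc.le), hlap c hc.le, integral_const]
          simp only [measure_univ, probReal_univ, ENNReal.toReal_one, smul_eq_mul, one_mul]
          have := Real.add_one_le_exp (-(t * φ c))
          have h2 : Real.exp (-t * φ c) = Real.exp (-(t * φ c)) := by ring_nf
          linarith [h2 ▸ this]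
  -- Bound B
  have hB : (∫⁻ s in Set.Ioi (0:ℝ), ENNReal.ofReal (p s) ∂μ t)
      ≤ ENNReal.ofReal (CB * (t * φ c / W (1/c))) := by
    have hq' : (0:ℝ) ≤ (1 - Real.exp (-1))⁻¹ / W (1/c) := by positivity
    have hcinv : c * (1/c) = 1 := by field_simp
    calc (∫⁻ s in Set.Ioi (0:ℝ), ENNReal.ofReal (p s) ∂μ t)
        ≤ ∫⁻ s in Set.Ioi (0:ℝ),
            ENNReal.ofReal ((1 - Real.exp (-1))⁻¹ / W (1/c)) *
              ENNReal.ofReal (1 - Real.exp (-c * s)) ∂μ t := by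
          have hcont2 : Continuous fun x : ℝ => 1 - Real.exp (-c*x) := by continuity
          apply setLIntegral_mono (measurable_const.mul
            (ENNReal.measurable_ofReal.comp hcont2.measurable))
          intro s hs
          simp only [Pi.mul_apply, Function.comp_apply]
          rw [← ENNReal.ofReal_mul hq']
          apply ENNReal.ofReal_le_ofReal
          have hs0 : (0:ℝ) < s := hs
          have hmin2 : p s ≤ min 1 (c*s) / W (1/c) := by
            rcases le_total s (1/c) with hsc | hsc
            · have h1 : c * s ≤ 1 := by nlinarith
              rw [min_eq_right h1]
              calc p s ≤ min (1 / W s) (s * c / W (1/c)) := hple s hs0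
                _ ≤ s * c / W (1/c) := min_le_right _ _
                _ = c * s / W (1/c) := by ring
            · have h1 : (1:ℝ) ≤ c * s := by nlinarith
              rw [min_eq_left h1]
              calc p s ≤ min (1 / W s) (s * c / W (1/c)) := hple s hs0
                _ ≤ 1 / W s := min_le_left _ _
                _ ≤ 1 / W (1/c) := by
                    apply one_div_le_one_div_of_le hW1c
                    exact hWmono (Set.mem_Ioi.mpr (by positivity)) (Set.mem_Ioi.mpr hs0) hsc
          have hexp := min_le_inv_one_sub_exp (x := c*s) (by positivity)
          calc p s ≤ min 1 (c*s) / W (1/c) := hmin2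
            _ ≤ ((1 - Real.exp (-1))⁻¹ * (1 - Real.exp (-(c*s)))) / W (1/c) := by
                gcongr
            _ = (1 - Real.exp (-1))⁻¹ / W (1/c) * (1 - Real.exp (-c * s)) := by
                rw [neg_mul]
                ring
      _ = ENNReal.ofReal ((1 - Real.exp (-1))⁻¹ / W (1/c)) *
            ∫⁻ s in Set.Ioi (0:ℝ), ENNReal.ofReal (1 - Real.exp (-c * s)) ∂μ t :=
          lintegral_const_mul' _ _ ENNReal.ofReal_ne_top
      _ ≤ ENNReal.ofReal ((1 - Real.exp (-1))⁻¹ / W (1/c)) * ENNReal.ofReal (t * φ c) :=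
          mul_le_mul_right hB1 _
      _ = ENNReal.ofReal (CB * (t * φ c / W (1/c))) := by
          rw [← ENNReal.ofReal_mul hq']
          congr 1
          rw [hCB]
          ring
  rcases le_total (1 / W (1 / genInv φ (1/t))) (t * φ c / W (1/c)) with hmin | hmin
  · rw [min_eq_left hmin]
    by_cases hφc : φ c = 0
    · have h0 : (∫⁻ s in Set.Ioi (0:ℝ), ENNReal.ofReal (p s) ∂μ t) ≤ 0 := by
        simpa [hφc] using hB
      exact le_trans h0 zero_le
    have hφc' : 0 < φ c := lt_of_le_of_ne (hφnn c (le_of_lt hc)) (Ne.symm hφc)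
    set S : Set ℝ := {l : ℝ | 0 < l ∧ 1/t ≤ φ l} with hS
    have hSne : S.Nonempty := by
      set y : ℝ := (max 1 (C₂/(t * φ c))) ^ ((1:ℝ)/β) with hy
      have hbase1 : (1:ℝ) ≤ max 1 (C₂/(t * φ c)) := le_max_left _ _
      have hbase0 : (0:ℝ) < max 1 (C₂/(t * φ c)) := lt_of_lt_of_le one_pos hbase1
      have hy1 : (1:ℝ) ≤ y := by
        rw [hy]
        calc (1:ℝ) = (max 1 (C₂/(t * φ c))) ^ (0:ℝ) := (Real.rpow_zero _).symm
          _ ≤ (max 1 (C₂/(t * φ c))) ^ ((1:ℝ)/β) :=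
              Real.rpow_le_rpow_of_exponent_le hbase1 (by positivity)
      have hy0 : (0:ℝ) < y := lt_of_lt_of_le one_pos hy1
      have hyβ : y ^ β = max 1 (C₂/(t * φ c)) := by
        rw [hy, ← Real.rpow_mul hbase0.le, one_div_mul_cancel (ne_of_gt hβ0), Real.rpow_one]
      have hyβpos : (0:ℝ) < y ^ β := Real.rpow_pos_of_pos hy0 _
      refine ⟨c * y, by positivity, ?_⟩
      have hsc := hscal (1/y) (by positivity) (by rw [div_le_one hy0]; exact hy1)
        (c * y) (by positivity)
      have harg : (1/y) * (c*y) = c := by field_simp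
      rw [harg] at hsc
      have hyb : ((1:ℝ)/y) ^ β = 1 / (y ^ β) := by
        rw [one_div, one_div]
        exact Real.inv_rpow hy0.le β
      rw [hyb] at hsc
      have hφcy : 0 ≤ φ (c*y) := hφnn _ (Set.mem_Ici.mpr (by positivity))
      have h3 := mul_le_mul_of_nonneg_left hsc hyβpos.le
      have h4 : y^β * (C₂ * (1/(y^β)) * φ (c*y)) = C₂ * φ (c*y) := by field_simp
      rw [h4] at h3
      have h5 : C₂/(t * φ c) ≤ y ^ β := hyβ ▸ le_max_right _ _
      have h6 : C₂ / t ≤ y^β * φ c := by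
        have h7 := mul_le_mul_of_nonneg_right h5 hφc'.le
        have heq : C₂/(t * φ c) * φ c = C₂/t := by
          field_simp
        linarith [heq ▸ h7]
      have hC₂0 : (0:ℝ) < C₂ := lt_of_lt_of_le one_pos hC₂
      rw [div_le_iff₀ ht]
      have hid : C₂/t*t = C₂ := by field_simp
      nlinarith [mul_le_mul_of_nonneg_right (le_trans h6 h3) ht.le]
    -- positive lower bound for S
    have hcw : ContinuousWithinAt φ (Set.Ici 0) 0 := hcont 0 Set.self_mem_Ici
    have hev : ∀ᶠ l in nhdsWithin 0 (Set.Ici 0), φ l < 1/t := by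
      have hnb : Set.Iio (1/t) ∈ nhds (φ 0) := by
        rw [hφ0]
        exact Iio_mem_nhds (by positivity)
      exact hcw hnb
    rw [eventually_nhdsWithin_iff, Metric.eventually_nhds_iff] at hev
    obtain ⟨ε, hε0, hε⟩ := hev
    have hSlbε : ∀ l ∈ S, ε ≤ l := by
      intro l hl
      by_contra hlt
      push_neg at hlt
      have hd : dist l 0 < ε := by
        rw [Real.dist_eq, sub_zero, abs_of_pos hl.1]
        exact hlt
      exact absurd hl.2 (not_le.mpr (hε hd (le_of_lt hl.1)))
    have hgdef : genInv φ (1/t) = sInf S := by rw [genInv, hS]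
    have hgmem : genInv φ (1/t) ∈ S := by
      have hSeq : S = Set.Ici ε ∩ φ ⁻¹' (Set.Ici (1/t)) := by
        ext l
        constructor
        · rintro ⟨hl0, hlφ⟩
          exact ⟨hSlbε l ⟨hl0, hlφ⟩, hlφ⟩
        · rintro ⟨hlε, hlφ⟩
          exact ⟨lt_of_lt_of_le hε0 hlε, hlφ⟩
      have hclosed : IsClosed S := by
        rw [hSeq]
        exact (hcont.mono (Set.Ici_subset_Ici.mpr hε0.le)).preimage_isClosed_of_isClosed
          isClosed_Ici isClosed_Ici
      rw [hgdef]
      exact hclosed.csInf_mem hSne ⟨ε, hSlbε⟩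
    set g : ℝ := genInv φ (1/t) with hgg
    have hg0 : 0 < g := hgmem.1
    have hgφ : 1/t ≤ φ g := hgmem.2
    set r : ℝ := 1/g with hrdef
    have hr : 0 < r := by rw [hrdef]; positivity
    have htφg : 1 ≤ t * φ g := by
      rw [div_le_iff₀ ht] at hgφ
      linarith
    have hC₂0 : (0:ℝ) < C₂ := lt_of_lt_of_le one_pos hC₂
    -- scaling lower bound
    have hscale2 : ∀ k : ℕ, (2:ℝ)^((k:ℝ)*β) / C₂ ≤ t * φ ((2:ℝ)^k * g) := by
      intro k
      have h2kpos : (0:ℝ) < 2^k := by positivity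
      have h2k1 : (1:ℝ) ≤ (2:ℝ)^k := one_le_pow₀ one_le_two
      have hsc := hscal ((2:ℝ)^k)⁻¹ (by positivity) (inv_le_one_of_one_le₀ h2k1)
        ((2:ℝ)^k * g) (by positivity)
      have harg : ((2:ℝ)^k)⁻¹ * ((2:ℝ)^k * g) = g := by field_simp
      rw [harg] at hsc
      have hbpos : (0:ℝ) < (2:ℝ)^((k:ℝ)*β) := Real.rpow_pos_of_pos two_pos _
      have hpw : (((2:ℝ)^k)⁻¹) ^ β = ((2:ℝ)^((k:ℝ)*β))⁻¹ := by
        rw [Real.inv_rpow (by positivity), ← Real.rpow_natCast 2 k,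
          ← Real.rpow_mul (by norm_num)]
      rw [hpw] at hsc
      have hφ2k : 0 ≤ φ ((2:ℝ)^k * g) := hφnn _ (Set.mem_Ici.mpr (by positivity))
      have h3 : (2:ℝ)^((k:ℝ)*β) * φ g ≤ C₂ * φ ((2:ℝ)^k * g) := by
        have h4 := mul_le_mul_of_nonneg_left hsc hbpos.le
        have hid : (2:ℝ)^((k:ℝ)*β) * (C₂ * ((2:ℝ)^((k:ℝ)*β))⁻¹ * φ ((2:ℝ)^k * g))
            = C₂ * φ ((2:ℝ)^k * g) := by field_simp
        linarith [hid ▸ h4]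
      rw [div_le_iff₀ hC₂0]
      calc (2:ℝ)^((k:ℝ)*β) ≤ (2:ℝ)^((k:ℝ)*β) * (t * φ g) :=
            le_mul_of_one_le_right hbpos.le htφg
        _ = t * ((2:ℝ)^((k:ℝ)*β) * φ g) := by ring
        _ ≤ t * (C₂ * φ ((2:ℝ)^k * g)) := mul_le_mul_of_nonneg_left h3 ht.le
        _ = t * φ ((2:ℝ)^k * g) * C₂ := by ring
    -- Markov bound
    have hmarkovA : ∀ a : ℝ, 0 < a →
        μ t (Set.Ioc 0 a) ≤ ENNReal.ofReal (Real.exp 1 * Real.exp (-t * φ (1/a))) := by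
      intro a ha
      have hconta : Continuous fun s : ℝ => Real.exp (-(1/a) * s) := by continuity
      calc μ t (Set.Ioc 0 a) = ∫⁻ _ in Set.Ioc (0:ℝ) a, 1 ∂μ t := (setLIntegral_one _).symm
        _ ≤ ∫⁻ s in Set.Ioc (0:ℝ) a,
              ENNReal.ofReal (Real.exp 1) * ENNReal.ofReal (Real.exp (-(1/a) * s)) ∂μ t := by
            apply setLIntegral_mono
              (measurable_const.mul (ENNReal.measurable_ofReal.comp hconta.measurable))
            intro s hs
            simp only [Pi.mul_apply, Function.comp_apply]
            rw [← ENNReal.ofReal_mul (Real.exp_pos 1).le, ← ENNReal.ofReal_one]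
            apply ENNReal.ofReal_le_ofReal
            rw [← Real.exp_add]
            apply Real.one_le_exp
            have hsa : s/a ≤ 1 := (div_le_one ha).mpr hs.2
            have hsa2 : -(1/a) * s = -(s/a) := by ring
            rw [hsa2]
            linarith
        _ ≤ ∫⁻ s, ENNReal.ofReal (Real.exp 1) * ENNReal.ofReal (Real.exp (-(1/a) * s)) ∂μ t :=
            setLIntegral_le_lintegral _ _
        _ = ENNReal.ofReal (Real.exp 1) * ENNReal.ofReal (Real.exp (-t * φ (1/a))) := by
            rw [lintegral_const_mul' _ _ ENNReal.ofReal_ne_top, hlin (1/a) (by positivity)]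
        _ = ENNReal.ofReal (Real.exp 1 * Real.exp (-t * φ (1/a))) :=
            (ENNReal.ofReal_mul (Real.exp_pos 1).le).symm
    have hmarkov2 : ∀ k : ℕ, μ t (Set.Ioc 0 (r / 2^k))
        ≤ ENNReal.ofReal (Real.exp 1 * Real.exp (-((2:ℝ)^((k:ℝ)*β)/C₂))) := by
      intro k
      have ha : (0:ℝ) < r / 2^k := by positivity
      have h1 := hmarkovA (r/2^k) ha
      have harg2 : 1/(r/2^k) = (2:ℝ)^k * g := by
        rw [hrdef]
        field_simp
      rw [harg2] at h1
      refine h1.trans (ENNReal.ofReal_le_ofReal ?_)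
      have h2 := hscale2 k
      apply mul_le_mul_of_nonneg_left _ (Real.exp_pos 1).le
      apply Real.exp_le_exp.mpr
      linarith
    -- dyadic decomposition
    have hWr : 0 < W r := hWpos r hr
    have hdyad : (∫⁻ s in Set.Ioc (0:ℝ) r, ENNReal.ofReal ((r/s)^δ) ∂μ t)
        ≤ ENNReal.ofReal K := by
      have hcover : Set.Ioc (0:ℝ) r ⊆ ⋃ k : ℕ, Set.Ioc (r / 2^(k+1)) (r / 2^k) := by
        intro s hs
        have hs0 : (0:ℝ) < s := hs.1
        have hex : ∃ k : ℕ, r / 2^(k+1) < s := by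
          obtain ⟨k, hk⟩ := pow_unbounded_of_one_lt (r/s) one_lt_two
          refine ⟨k, ?_⟩
          have hmono2 : r / 2^(k+1) ≤ r / 2^k := by
            rw [div_le_div_iff₀ (by positivity) (by positivity)]
            have hp2 : (2:ℝ)^(k+1) = 2^k * 2 := pow_succ 2 k
            nlinarith [pow_pos (two_pos : (0:ℝ) < 2) k, hr.le]
          have h2 : r / 2^k < s := by
            rw [div_lt_iff₀ (by positivity : (0:ℝ) < 2^k)]
            rw [div_lt_iff₀ hs0] at hk
            nlinarith
          linarith
        have h1 : r / 2^(Nat.find hex + 1) < s := Nat.find_spec hex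
        have h2 : s ≤ r / 2^(Nat.find hex) := by
          rcases Nat.eq_zero_or_pos (Nat.find hex) with h | h
          · rw [h]
            simpa using hs.2
          · have h3 := Nat.find_min hex (Nat.sub_lt h one_pos)
            have heq : Nat.find hex - 1 + 1 = Nat.find hex := Nat.succ_pred_eq_of_pos h
            rw [heq] at h3
            linarith [not_lt.mp h3]
        exact Set.mem_iUnion.mpr ⟨Nat.find hex, h1, h2⟩
      calc (∫⁻ s in Set.Ioc (0:ℝ) r, ENNReal.ofReal ((r/s)^δ) ∂μ t)
          ≤ ∫⁻ s in ⋃ k : ℕ, Set.Ioc (r / 2^(k+1)) (r / 2^k),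
              ENNReal.ofReal ((r/s)^δ) ∂μ t := lintegral_mono_set hcover
        _ ≤ ∑' k : ℕ, ∫⁻ s in Set.Ioc (r / 2^(k+1)) (r / 2^k),
              ENNReal.ofReal ((r/s)^δ) ∂μ t := lintegral_iUnion_le _ _
        _ ≤ ∑' k : ℕ, ENNReal.ofReal ((2:ℝ)^(((k:ℝ)+1)*δ))
              * ENNReal.ofReal (Real.exp 1 * Real.exp (-((2:ℝ)^((k:ℝ)*β)/C₂))) := by
            apply ENNReal.tsum_le_tsum
            intro k
            calc (∫⁻ s in Set.Ioc (r / 2^(k+1)) (r / 2^k), ENNReal.ofReal ((r/s)^δ) ∂μ t)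
                ≤ ∫⁻ _ in Set.Ioc (r / 2^(k+1)) (r / 2^k),
                    ENNReal.ofReal ((2:ℝ)^(((k:ℝ)+1)*δ)) ∂μ t := by
                  apply setLIntegral_mono measurable_const
                  intro s hs
                  apply ENNReal.ofReal_le_ofReal
                  have h2p : (0:ℝ) < 2^(k+1) := by positivity
                  have hs0 : (0:ℝ) < s := lt_trans (by positivity) hs.1
                  have hrs : r/s ≤ 2^(k+1) := by
                    obtain ⟨hsl, -⟩ := hs
                    rw [div_le_iff₀ hs0]
                    rw [div_lt_iff₀ h2p] at hsl
                    nlinarith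
                  calc (r/s)^δ ≤ ((2:ℝ)^(k+1))^δ :=
                        Real.rpow_le_rpow (by positivity) hrs hδ.le
                    _ = (2:ℝ)^(((k:ℝ)+1)*δ) := by
                        rw [← Real.rpow_natCast 2 (k+1), ← Real.rpow_mul (by norm_num)]
                        push_cast
                        ring_nf
              _ = ENNReal.ofReal ((2:ℝ)^(((k:ℝ)+1)*δ))
                    * μ t (Set.Ioc (r / 2^(k+1)) (r / 2^k)) := setLIntegral_const _ _
              _ ≤ ENNReal.ofReal ((2:ℝ)^(((k:ℝ)+1)*δ))
                    * ENNReal.ofReal (Real.exp 1 * Real.exp (-((2:ℝ)^((k:ℝ)*β)/C₂))) := by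
                  apply mul_le_mul_right
                  refine le_trans (measure_mono ?_) (hmarkov2 k)
                  intro x hx
                  exact ⟨lt_trans (by positivity) hx.1, hx.2⟩
        _ = ENNReal.ofReal K := by
            rw [hK, ENNReal.ofReal_tsum_of_nonneg (fun k => by positivity) hsum]
            apply tsum_congr
            intro k
            rw [← ENNReal.ofReal_mul (by positivity)]
    -- part 1
    have part1 : (∫⁻ s in Set.Ioc (0:ℝ) r, ENNReal.ofReal (p s) ∂μ t)
        ≤ ENNReal.ofReal (C₁ / W r) * ENNReal.ofReal K := by
      calc (∫⁻ s in Set.Ioc (0:ℝ) r, ENNReal.ofReal (p s) ∂μ t)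
          ≤ ∫⁻ s in Set.Ioc (0:ℝ) r,
              ENNReal.ofReal (C₁ / W r) * ENNReal.ofReal ((r/s)^δ) ∂μ t := by
            apply setLIntegral_mono' measurableSet_Ioc
            intro s hs
            rw [← ENNReal.ofReal_mul (by positivity)]
            apply ENNReal.ofReal_le_ofReal
            have hs0 : (0:ℝ) < s := hs.1
            have hWs := hWpos s hs0
            have hws := hWscal s r hs0 hs.2
            calc p s ≤ min (1 / W s) (s * c / W (1/c)) := hple s hs0
              _ ≤ 1 / W s := min_le_left _ _
              _ ≤ C₁ / W r * (r/s)^δ := by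
                  have h1 : 1 / W s = (W r / W s) / W r := by field_simp
                  rw [h1]
                  have h2 : (W r / W s) / W r ≤ (C₁ * (r/s)^δ) / W r := by gcongr
                  calc (W r / W s) / W r ≤ (C₁ * (r/s)^δ) / W r := h2
                    _ = C₁ / W r * (r/s)^δ := by ring
        _ = ENNReal.ofReal (C₁ / W r) * ∫⁻ s in Set.Ioc (0:ℝ) r, ENNReal.ofReal ((r/s)^δ) ∂μ t :=
            lintegral_const_mul' _ _ ENNReal.ofReal_ne_top
        _ ≤ ENNReal.ofReal (C₁ / W r) * ENNReal.ofReal K := mul_le_mul_right hdyad _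
    -- part 2
    have part2 : (∫⁻ s in Set.Ioi r, ENNReal.ofReal (p s) ∂μ t)
        ≤ ENNReal.ofReal (1 / W r) := by
      calc (∫⁻ s in Set.Ioi r, ENNReal.ofReal (p s) ∂μ t)
          ≤ ∫⁻ _ in Set.Ioi r, ENNReal.ofReal (1 / W r) ∂μ t := by
            apply setLIntegral_mono measurable_const
            intro s hs
            apply ENNReal.ofReal_le_ofReal
            have hs0 : (0:ℝ) < s := lt_trans hr hs
            calc p s ≤ min (1 / W s) (s * c / W (1/c)) := hple s hs0
              _ ≤ 1 / W s := min_le_left _ _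
              _ ≤ 1 / W r := by
                  apply one_div_le_one_div_of_le hWr
                  exact hWmono (Set.mem_Ioi.mpr hr) (Set.mem_Ioi.mpr hs0) (le_of_lt hs)
        _ = ENNReal.ofReal (1 / W r) * μ t (Set.Ioi r) := setLIntegral_const _ _
        _ ≤ ENNReal.ofReal (1 / W r) * 1 := mul_le_mul_right prob_le_one _
        _ = ENNReal.ofReal (1 / W r) := mul_one _
    -- combine
    have hsplitset : Set.Ioc (0:ℝ) r ∪ Set.Ioi r = Set.Ioi (0:ℝ) := Set.Ioc_union_Ioi_eq_Ioi hr.le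
    have hA : (∫⁻ s in Set.Ioi (0:ℝ), ENNReal.ofReal (p s) ∂μ t)
        ≤ ENNReal.ofReal (CA * (1 / W r)) := by
      rw [← hsplitset, lintegral_union measurableSet_Ioi (Set.Ioc_disjoint_Ioi le_rfl)]
      calc (∫⁻ s in Set.Ioc (0:ℝ) r, ENNReal.ofReal (p s) ∂μ t)
            + (∫⁻ s in Set.Ioi r, ENNReal.ofReal (p s) ∂μ t)
          ≤ ENNReal.ofReal (C₁ / W r) * ENNReal.ofReal K + ENNReal.ofReal (1 / W r) :=
            add_le_add part1 part2
        _ = ENNReal.ofReal (C₁ / W r * K + 1 / W r) := by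
            rw [← ENNReal.ofReal_mul (by positivity), ← ENNReal.ofReal_add (by positivity) (by positivity)]
        _ = ENNReal.ofReal (CA * (1 / W r)) := by
            congr 1
            rw [hCA]
            ring
    refine hA.trans (ENNReal.ofReal_le_ofReal ?_)
    have hCAC : CA ≤ C := le_trans (le_max_left CA CB) (le_max_right _ _)
    have hinvW : (0:ℝ) ≤ 1 / W r := by positivity
    nlinarith
  · rw [min_eq_right hmin]
    refine hB.trans (ENNReal.ofReal_le_ofReal ?_)
    have hb0 : 0 ≤ t * φ c / W (1/c) := by
      have := hφnn c hc.le
      positivity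
    have : CB ≤ C := le_trans (le_max_right _ _) (le_max_right _ _)
    nlinarith
end
end
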